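/- arXiv:2501.06360 — 7 statements merged into one kernel-verified Lean document; each statement's English description precedes it below -/
import Mathlib

section
/- Let p ∈ ℕ, β ∈ ℝᵖ, and let ρ be a finite measure on (ℝᵖ) × ℝ. Let ρ' be the pushforward of ρ under the measurable map (x, e) ↦ (x, ⟨β, x⟩ + e). Then for ρ.fst-almost every x ∈ ℝᵖ and every t ∈ ℝ, condCDF ρ' x t = condCDF ρ x (t − ⟨β, x⟩). -/
open MeasureTheory ProbabilityTheory Set Filter Topology
open scoped ENNReal

lemma aux_tendsto_rat_seq (t : ℝ) :
    ∃ q : ℕ → ℚ, Tendsto (fun n => (q n : ℝ)) atTop (𝓝[≥] t) := by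
  have h : ∀ n : ℕ, ∃ q : ℚ, t < (q : ℝ) ∧ (q : ℝ) < t + 1 / (n + 1) := by
    intro n
    exact exists_rat_btwn (lt_add_of_pos_right t (by positivity))
  choose q hq1 hq2 using h
  refine ⟨q, tendsto_nhdsWithin_of_tendsto_nhds_of_eventually_within _ ?_ ?_⟩
  · have h0 : Tendsto (fun n : ℕ => t + 1 / ((n : ℝ) + 1)) atTop (𝓝 (t + 0)) :=
      tendsto_const_nhds.add tendsto_one_div_add_atTop_nhds_zero_nat
    rw [add_zero] at h0
    exact tendsto_of_tendsto_of_tendsto_of_le_of_le tendsto_const_nhds h0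
      (fun n => (hq1 n).le) (fun n => (hq2 n).le)
  · exact Eventually.of_forall fun n => (hq1 n).le

/-- If `ρ'` is the pushforward of a finite measure `ρ` on `ℝᵖ × ℝ` under
`(x, e) ↦ (x, βᵀx + e)`, then for `ρ.fst`-almost every `x` and every `t`,
`condCDF ρ' x t = condCDF ρ x (t − βᵀx)`. -/
theorem condCDF_map_add_linear
    (p : ℕ) (β : Fin p → ℝ) (ρ : Measure ((Fin p → ℝ) × ℝ)) [IsFiniteMeasure ρ] :
    ∀ᵐ x ∂ρ.fst, ∀ t : ℝ,
      condCDF (ρ.map (fun q : (Fin p → ℝ) × ℝ => (q.1, (∑ i, β i * q.1 i) + q.2))) x t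
        = condCDF ρ x (t - ∑ i, β i * x i) := by
  set c : (Fin p → ℝ) → ℝ := fun x => ∑ i, β i * x i with hc_def
  have hc : Measurable c := by
    apply Finset.measurable_sum
    intro i _
    exact (measurable_pi_apply i).const_mul _
  set φ : (Fin p → ℝ) × ℝ → (Fin p → ℝ) × ℝ := fun q => (q.1, c q.1 + q.2) with hφ_def
  have hφ : Measurable φ := measurable_fst.prodMk ((hc.comp measurable_fst).add measurable_snd)
  set ρ' : Measure ((Fin p → ℝ) × ℝ) := ρ.map φ with hρ'_def
  have hfin : IsFiniteMeasure ρ' := by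
    constructor
    rw [hρ'_def, Measure.map_apply hφ MeasurableSet.univ]
    exact measure_lt_top ρ _
  have hfst : ρ'.fst = ρ.fst := by
    rw [hρ'_def, Measure.fst, Measure.fst, Measure.map_map measurable_fst hφ]
    rfl
  -- the kernel associated to condCDF ρ
  have hK := isCondKernelCDF_condCDF ρ
  set κ := hK.toKernel _ with hκ_def
  have hκ_apply : ∀ x, κ ((), x) = (condCDF ρ x).measure := fun x => rfl
  -- step 1: for each rational r, a.e. equality
  have h_rat : ∀ r : ℚ, ∀ᵐ x ∂ρ.fst,
      condCDF ρ' x (r : ℝ) = condCDF ρ x ((r : ℝ) - c x) := by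
    intro r
    have hT : MeasurableSet {q : (Fin p → ℝ) × ℝ | q.2 ≤ (r : ℝ) - c q.1} :=
      measurableSet_le measurable_snd ((measurable_const.sub (hc.comp measurable_fst)))
    -- the two ennreal-valued functions
    set f : (Fin p → ℝ) → ℝ≥0∞ := fun x => ENNReal.ofReal (condCDF ρ' x (r : ℝ)) with hf_def
    set g : (Fin p → ℝ) → ℝ≥0∞ := fun x => (condCDF ρ x).measure (Iic ((r : ℝ) - c x))
      with hg_def
    have hf_meas : Measurable f := (measurable_condCDF ρ' (r : ℝ)).ennreal_ofReal
    have hg_meas : Measurable g := by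
      have hT' : MeasurableSet {q : (Unit × (Fin p → ℝ)) × ℝ | q.2 ≤ (r : ℝ) - c q.1.2} :=
        measurableSet_le measurable_snd
          (measurable_const.sub (hc.comp (measurable_snd.comp measurable_fst)))
      have h1 : Measurable fun a : Unit × (Fin p → ℝ) =>
          κ a (Prod.mk a ⁻¹' {q : (Unit × (Fin p → ℝ)) × ℝ | q.2 ≤ (r : ℝ) - c q.1.2}) :=
        Kernel.measurable_kernel_prodMk_left hT'
      have h2 := h1.comp (measurable_prodMk_left (m := ⊤) : Measurable fun x => ((), x))
      exact h2
    have h_eq : f =ᵐ[ρ.fst] g := by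
      refine ae_eq_of_forall_setLIntegral_eq_of_sigmaFinite hf_meas hg_meas fun s hs _ => ?_
      -- LHS
      have hL : ∫⁻ x in s, f x ∂ρ.fst = ρ' (s ×ˢ Iic (r : ℝ)) := by
        rw [← hfst]; exact setLIntegral_condCDF ρ' (r : ℝ) hs
      -- RHS
      have hR : ∫⁻ x in s, g x ∂ρ.fst
          = ρ {q : (Fin p → ℝ) × ℝ | q.1 ∈ s ∧ q.2 ≤ (r : ℝ) - c q.1} := by
        have hs' : MeasurableSet {q : (Fin p → ℝ) × ℝ | q.1 ∈ s ∧ q.2 ≤ (r : ℝ) - c q.1} :=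
          (hs.preimage measurable_fst).inter hT
        have := lintegral_toKernel_mem hK () hs'
        simp only [Kernel.const_apply] at this
        rw [← this]
        rw [← lintegral_indicator hs]
        congr 1
        ext x
        rw [hκ_apply]
        by_cases hx : x ∈ s
        · simp only [Set.indicator_of_mem hx, hg_def]
          congr 1
          ext y
          simp [hx, Iic]
        · simp only [Set.indicator_of_notMem hx]
          have : {y : ℝ | (x, y) ∈ {q : (Fin p → ℝ) × ℝ | q.1 ∈ s ∧ q.2 ≤ (r : ℝ) - c q.1}}
              = (∅ : Set ℝ) := by
            ext y; simp [hx]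
          rw [show Prod.mk x ⁻¹' {q : (Fin p → ℝ) × ℝ | q.1 ∈ s ∧ q.2 ≤ (r : ℝ) - c q.1} = (∅ : Set ℝ) from this, measure_empty]
      rw [hL, hR, hρ'_def, Measure.map_apply hφ (hs.prod measurableSet_Iic)]
      congr 1
      ext q
      simp only [hφ_def, mem_preimage, mem_prod, mem_Iic, mem_setOf_eq]
      constructor
      · rintro ⟨h1, h2⟩; exact ⟨h1, by linarith⟩
      · rintro ⟨h1, h2⟩; exact ⟨h1, by linarith⟩
    filter_upwards [h_eq] with x hx
    rw [hf_def, hg_def] at hx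
    simp only at hx
    rw [measure_condCDF_Iic] at hx
    rw [← ENNReal.ofReal_eq_ofReal_iff (condCDF_nonneg _ _ _) (condCDF_nonneg _ _ _)]
    exact hx
  -- step 2: combine over rationals and extend by right-continuity
  have h_all : ∀ᵐ x ∂ρ.fst, ∀ r : ℚ,
      condCDF ρ' x (r : ℝ) = condCDF ρ x ((r : ℝ) - c x) := ae_all_iff.mpr h_rat
  filter_upwards [h_all] with x hx
  intro t
  obtain ⟨q, hq⟩ := aux_tendsto_rat_seq t
  have hq' : Tendsto (fun n => (q n : ℝ)) atTop (𝓝 t) :=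
    hq.mono_right nhdsWithin_le_nhds
  have hF : Tendsto (fun n => condCDF ρ' x (q n : ℝ)) atTop (𝓝 (condCDF ρ' x t)) :=
    ((condCDF ρ' x).right_continuous t).tendsto.comp hq
  have hG : Tendsto (fun n => condCDF ρ x ((q n : ℝ) - c x)) atTop
      (𝓝 (condCDF ρ x (t - c x))) := by
    refine ((condCDF ρ x).right_continuous (t - c x)).tendsto.comp ?_
    refine tendsto_nhdsWithin_of_tendsto_nhds_of_eventually_within _
      (hq'.sub tendsto_const_nhds) ?_
    filter_upwards [hq.eventually self_mem_nhdsWithin] with n hn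
    exact sub_le_sub_right hn _
  have : Tendsto (fun n => condCDF ρ' x (q n : ℝ)) atTop (𝓝 (condCDF ρ x (t - c x))) := by
    simp_rw [fun n => hx (q n)]
    exact hG
  exact tendsto_nhds_unique hF this
end

section
/- In the combined-data model, assume (i) μ[R | 𝔪] = p(X) almost surely for a measurable function p : ℝᵖ → ℝ, (ii) μ[R·ε | 𝔪] = 0 almost surely, (iii) μ[R·Z | 𝔪] = p(X)·μ[Z | 𝔪] almost surely, and that R·ε is integrable. Then for all bounded measurable functions c, b, g : ℝᵖ → ℝ, E[R·ε·c(X) + (R − p(X))·(Z − g(X))·b(X)] = 0. That is, every element of the claimed orthogonal complement Λ⊥ = { R(Y − βᵀX)c(X) + (R − p(X))(Z − F(c − βᵀX, X))b(X) } of the nuisance tangent space, even with the true F replaced by any working function g, is a valid mean-zero estimating function. -/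
open MeasureTheory ProbabilityTheory

/-- Pull-out lemma: integrating `f * Y` equals integrating `f * μ[Y|m]` for `m`-measurable `f`. -/
lemma pullout_integral {Ω : Type*} {m0 : MeasurableSpace Ω} (μ : Measure Ω)
    [IsProbabilityMeasure μ] {m : MeasurableSpace Ω} (hm : m ≤ m0)
    {f Y : Ω → ℝ} (hf : StronglyMeasurable[m] f)
    (hfY : Integrable (fun ω => f ω * Y ω) μ) (hY : Integrable Y μ) :
    ∫ ω, f ω * Y ω ∂μ = ∫ ω, f ω * (μ[Y|m]) ω ∂μ := by
  haveI : IsFiniteMeasure (μ.trim hm) := isFiniteMeasure_trim hm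
  have h := condExp_mul_of_stronglyMeasurable_left hf hfY hY
  calc ∫ ω, f ω * Y ω ∂μ = ∫ ω, (μ[fun ω => f ω * Y ω|m]) ω ∂μ :=
        (integral_condExp hm).symm
    _ = ∫ ω, f ω * (μ[Y|m]) ω ∂μ := integral_congr_ae h

/-- In the combined-data model, every element of the claimed orthogonal complement
`Λ⊥ = { Rε·c(X) + (R − p(X))(Z − g(X))·b(X) }`, even with the true `F` replaced by an
arbitrary working function `g`, has mean zero. -/
theorem lambdaPerp_mean_zero
    {Ω : Type*} [MeasurableSpace Ω] (μ : Measure Ω) [IsProbabilityMeasure μ]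
    {d : ℕ} (X : Ω → (Fin d → ℝ)) (ε : Ω → ℝ) (R Z : Ω → ℝ)
    (hX : Measurable X) (hε : Measurable ε) (hR : Measurable R) (hZ : Measurable Z)
    (hR01 : ∀ ω, R ω = 0 ∨ R ω = 1) (hZ01 : ∀ ω, Z ω = 0 ∨ Z ω = 1)
    (p : (Fin d → ℝ) → ℝ) (hp : Measurable p)
    (h1 : μ[R | MeasurableSpace.comap X inferInstance] =ᵐ[μ] fun ω => p (X ω))
    (h2 : μ[fun ω => R ω * ε ω | MeasurableSpace.comap X inferInstance] =ᵐ[μ] 0)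
    (h3 : μ[fun ω => R ω * Z ω | MeasurableSpace.comap X inferInstance]
        =ᵐ[μ] fun ω => p (X ω) * (μ[Z | MeasurableSpace.comap X inferInstance]) ω)
    (hint : Integrable (fun ω => R ω * ε ω) μ) :
    ∀ c b g : (Fin d → ℝ) → ℝ, Measurable c → Measurable b → Measurable g →
      (∃ C : ℝ, ∀ x, |c x| ≤ C) → (∃ C : ℝ, ∀ x, |b x| ≤ C) → (∃ C : ℝ, ∀ x, |g x| ≤ C) →
      ∫ ω, (R ω * ε ω * c (X ω)
            + (R ω - p (X ω)) * (Z ω - g (X ω)) * b (X ω)) ∂μ = 0 := by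
  intro c b g hc hb hg hcb hbb hgb
  obtain ⟨Cc, hCc⟩ := hcb
  obtain ⟨Cb, hCb⟩ := hbb
  obtain ⟨Cg, hCg⟩ := hgb
  have hm : MeasurableSpace.comap X (inferInstance : MeasurableSpace (Fin d → ℝ))
      ≤ ‹MeasurableSpace Ω› := hX.comap_le
  set m : MeasurableSpace Ω := MeasurableSpace.comap X inferInstance with hm_def
  -- strongly measurable w.r.t. m
  have hXm : Measurable[m] X := comap_measurable X
  have hcX : StronglyMeasurable[m] (fun ω => c (X ω)) := (hc.comp hXm).stronglyMeasurable
  have hbX : StronglyMeasurable[m] (fun ω => b (X ω)) := (hb.comp hXm).stronglyMeasurable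
  have hgbX : StronglyMeasurable[m] (fun ω => g (X ω) * b (X ω)) :=
    ((hg.comp hXm).mul (hb.comp hXm)).stronglyMeasurable
  -- bounds
  have hR1 : ∀ ω, ‖R ω‖ ≤ 1 := fun ω => by rcases hR01 ω with h | h <;> simp [h]
  have hZ1 : ∀ ω, ‖Z ω‖ ≤ 1 := fun ω => by rcases hZ01 ω with h | h <;> simp [h]
  -- integrability
  have hRint : Integrable R μ :=
    (integrable_const (1 : ℝ)).mono' hR.aestronglyMeasurable (Filter.Eventually.of_forall hR1)
  have hZint : Integrable Z μ :=
    (integrable_const (1 : ℝ)).mono' hZ.aestronglyMeasurable (Filter.Eventually.of_forall hZ1)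
  have hRZint : Integrable (fun ω => R ω * Z ω) μ :=
    (integrable_const (1 : ℝ)).mono' (hR.mul hZ).aestronglyMeasurable
      (Filter.Eventually.of_forall fun ω => by
        calc ‖R ω * Z ω‖ = ‖R ω‖ * ‖Z ω‖ := norm_mul _ _
          _ ≤ 1 * 1 := mul_le_mul (hR1 ω) (hZ1 ω) (norm_nonneg _) zero_le_one
          _ = 1 := one_mul 1)
  set Q : Ω → ℝ := μ[R | m] with hQ_def
  set W : Ω → ℝ := μ[Z | m] with hW_def
  have hQint : Integrable Q μ := integrable_condExp
  have hQm : StronglyMeasurable[m] Q := stronglyMeasurable_condExp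
  have hQb : StronglyMeasurable[m] (fun ω => Q ω * b (X ω)) := hQm.mul hbX
  -- first term
  have T1 : ∫ ω, R ω * ε ω * c (X ω) ∂μ = 0 := by
    have e0 : ∫ ω, R ω * ε ω * c (X ω) ∂μ = ∫ ω, c (X ω) * (R ω * ε ω) ∂μ :=
      integral_congr_ae (Filter.Eventually.of_forall fun ω => by ring)
    have hi : Integrable (fun ω => c (X ω) * (R ω * ε ω)) μ :=
      hint.bdd_mul ((hcX.mono hm).aestronglyMeasurable)
        (c := Cc) (Filter.Eventually.of_forall fun ω => by simpa using hCc (X ω))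
    rw [e0, pullout_integral μ hm hcX hi hint]
    have : (fun ω => c (X ω) * (μ[fun ω => R ω * ε ω | m]) ω) =ᵐ[μ] fun _ => (0 : ℝ) := by
      filter_upwards [h2] with ω hω
      simp [hω]
    rw [integral_congr_ae this, integral_zero]
  -- second term
  have T2 : ∫ ω, (R ω - p (X ω)) * (Z ω - g (X ω)) * b (X ω) ∂μ = 0 := by
    -- replace p(X) by Q a.e. and expand
    have e0 : (fun ω => (R ω - p (X ω)) * (Z ω - g (X ω)) * b (X ω)) =ᵐ[μ]
        (fun ω => b (X ω) * (R ω * Z ω) - g (X ω) * b (X ω) * R ω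
          - Q ω * b (X ω) * Z ω + Q ω * (g (X ω) * b (X ω))) := by
      filter_upwards [h1] with ω hω
      rw [hω]; ring
    have i1 : Integrable (fun ω => b (X ω) * (R ω * Z ω)) μ :=
      hRZint.bdd_mul ((hbX.mono hm).aestronglyMeasurable)
        (c := Cb) (Filter.Eventually.of_forall fun ω => by simpa using hCb (X ω))
    have i2 : Integrable (fun ω => g (X ω) * b (X ω) * R ω) μ :=
      hRint.bdd_mul ((hgbX.mono hm).aestronglyMeasurable)
        (c := Cg * Cb) (Filter.Eventually.of_forall fun ω => by
          have := mul_le_mul (hCg (X ω)) (hCb (X ω)) (abs_nonneg _)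
            ((abs_nonneg _).trans (hCg (X ω)))
          simpa [abs_mul] using this)
    have i3 : Integrable (fun ω => Q ω * b (X ω) * Z ω) μ := by
      have : Integrable (fun ω => (b (X ω) * Z ω) * Q ω) μ :=
        hQint.bdd_mul (((hbX.mono hm).aestronglyMeasurable).mul hZ.aestronglyMeasurable)
          (c := Cb) (Filter.Eventually.of_forall fun ω => by
            calc ‖b (X ω) * Z ω‖ = ‖b (X ω)‖ * ‖Z ω‖ := norm_mul _ _
              _ ≤ Cb * 1 := mul_le_mul (by simpa using hCb (X ω)) (hZ1 ω) (norm_nonneg _)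
                  ((abs_nonneg _).trans (hCb (X ω)))
              _ = Cb := mul_one Cb)
      exact this.congr (Filter.Eventually.of_forall fun ω => by ring)
    have i4 : Integrable (fun ω => Q ω * (g (X ω) * b (X ω))) μ := by
      have : Integrable (fun ω => (g (X ω) * b (X ω)) * Q ω) μ :=
        hQint.bdd_mul ((hgbX.mono hm).aestronglyMeasurable)
          (c := Cg * Cb) (Filter.Eventually.of_forall fun ω => by
            have := mul_le_mul (hCg (X ω)) (hCb (X ω)) (abs_nonneg _)
              ((abs_nonneg _).trans (hCg (X ω)))
            simpa [abs_mul] using this)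
      exact this.congr (Filter.Eventually.of_forall fun ω => by ring)
    have split : ∫ ω, (b (X ω) * (R ω * Z ω) - g (X ω) * b (X ω) * R ω
          - Q ω * b (X ω) * Z ω + Q ω * (g (X ω) * b (X ω))) ∂μ
        = ∫ ω, b (X ω) * (R ω * Z ω) ∂μ - ∫ ω, g (X ω) * b (X ω) * R ω ∂μ
          - ∫ ω, Q ω * b (X ω) * Z ω ∂μ + ∫ ω, Q ω * (g (X ω) * b (X ω)) ∂μ := by
      have s1 : ∫ ω, (b (X ω) * (R ω * Z ω) - g (X ω) * b (X ω) * R ω) ∂μ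
          = ∫ ω, b (X ω) * (R ω * Z ω) ∂μ - ∫ ω, g (X ω) * b (X ω) * R ω ∂μ :=
        integral_sub i1 i2
      have s2 : ∫ ω, (b (X ω) * (R ω * Z ω) - g (X ω) * b (X ω) * R ω
            - Q ω * b (X ω) * Z ω) ∂μ
          = ∫ ω, (b (X ω) * (R ω * Z ω) - g (X ω) * b (X ω) * R ω) ∂μ
            - ∫ ω, Q ω * b (X ω) * Z ω ∂μ := integral_sub (i1.sub i2) i3
      have s3 : ∫ ω, (b (X ω) * (R ω * Z ω) - g (X ω) * b (X ω) * R ω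
            - Q ω * b (X ω) * Z ω + Q ω * (g (X ω) * b (X ω))) ∂μ
          = ∫ ω, (b (X ω) * (R ω * Z ω) - g (X ω) * b (X ω) * R ω
              - Q ω * b (X ω) * Z ω) ∂μ
            + ∫ ω, Q ω * (g (X ω) * b (X ω)) ∂μ := integral_add ((i1.sub i2).sub i3) i4
      rw [s3, s2, s1]
    rw [integral_congr_ae e0, split]
    -- evaluate each piece via pull-out
    have E1 : ∫ ω, b (X ω) * (R ω * Z ω) ∂μ = ∫ ω, b (X ω) * (Q ω * W ω) ∂μ := by
      rw [pullout_integral μ hm hbX i1 hRZint]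
      refine integral_congr_ae ?_
      filter_upwards [h3, h1] with ω hω3 hω1
      rw [hω3, ← hω1]
    have E2 : ∫ ω, g (X ω) * b (X ω) * R ω ∂μ = ∫ ω, g (X ω) * b (X ω) * Q ω ∂μ :=
      pullout_integral μ hm hgbX i2 hRint
    have E3 : ∫ ω, Q ω * b (X ω) * Z ω ∂μ = ∫ ω, Q ω * b (X ω) * W ω ∂μ :=
      pullout_integral μ hm hQb i3 hZint
    rw [E1, E2, E3]
    have e13 : ∫ ω, b (X ω) * (Q ω * W ω) ∂μ = ∫ ω, Q ω * b (X ω) * W ω ∂μ :=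
      integral_congr_ae (Filter.Eventually.of_forall fun ω => by ring)
    have e24 : ∫ ω, g (X ω) * b (X ω) * Q ω ∂μ = ∫ ω, Q ω * (g (X ω) * b (X ω)) ∂μ :=
      integral_congr_ae (Filter.Eventually.of_forall fun ω => by ring)
    rw [e13, e24]
    ring
  have iA : Integrable (fun ω => R ω * ε ω * c (X ω)) μ := by
    have : Integrable (fun ω => c (X ω) * (R ω * ε ω)) μ :=
      hint.bdd_mul ((hcX.mono hm).aestronglyMeasurable)
        (c := Cc) (Filter.Eventually.of_forall fun ω => by simpa using hCc (X ω))
    exact this.congr (Filter.Eventually.of_forall fun ω => by ring)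
  have iB : Integrable (fun ω => (R ω - p (X ω)) * (Z ω - g (X ω)) * b (X ω)) μ := by
    have i1 : Integrable (fun ω => b (X ω) * (R ω * Z ω)) μ :=
      hRZint.bdd_mul ((hbX.mono hm).aestronglyMeasurable)
        (c := Cb) (Filter.Eventually.of_forall fun ω => by simpa using hCb (X ω))
    have i2 : Integrable (fun ω => g (X ω) * b (X ω) * R ω) μ :=
      hRint.bdd_mul ((hgbX.mono hm).aestronglyMeasurable)
        (c := Cg * Cb) (Filter.Eventually.of_forall fun ω => by
          have := mul_le_mul (hCg (X ω)) (hCb (X ω)) (abs_nonneg _)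
            ((abs_nonneg _).trans (hCg (X ω)))
          simpa [abs_mul] using this)
    have i3 : Integrable (fun ω => Q ω * b (X ω) * Z ω) μ := by
      have : Integrable (fun ω => (b (X ω) * Z ω) * Q ω) μ :=
        hQint.bdd_mul (((hbX.mono hm).aestronglyMeasurable).mul hZ.aestronglyMeasurable)
          (c := Cb) (Filter.Eventually.of_forall fun ω => by
            calc ‖b (X ω) * Z ω‖ = ‖b (X ω)‖ * ‖Z ω‖ := norm_mul _ _
              _ ≤ Cb * 1 := mul_le_mul (by simpa using hCb (X ω)) (hZ1 ω) (norm_nonneg _)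
                  ((abs_nonneg _).trans (hCb (X ω)))
              _ = Cb := mul_one Cb)
      exact this.congr (Filter.Eventually.of_forall fun ω => by ring)
    have i4 : Integrable (fun ω => Q ω * (g (X ω) * b (X ω))) μ := by
      have : Integrable (fun ω => (g (X ω) * b (X ω)) * Q ω) μ :=
        hQint.bdd_mul ((hgbX.mono hm).aestronglyMeasurable)
          (c := Cg * Cb) (Filter.Eventually.of_forall fun ω => by
            have := mul_le_mul (hCg (X ω)) (hCb (X ω)) (abs_nonneg _)
              ((abs_nonneg _).trans (hCg (X ω)))
            simpa [abs_mul] using this)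
      exact this.congr (Filter.Eventually.of_forall fun ω => by ring)
    refine (((i1.sub i2).sub i3).add i4).congr ?_
    filter_upwards [h1] with ω hω
    simp only [Pi.add_apply, Pi.sub_apply]
    rw [hω]; ring
  rw [integral_add iA iB, T1, T2, add_zero]
end

section
/- In the combined-data model, assume (i) μ[R | 𝔪] = p(X) almost surely, (ii) μ[R·ε | 𝔪] = 0 almost surely, (iii) μ[Z | 𝔪] = F(X) almost surely, and (iv) μ[R·Z | 𝔪] = p(X)·F(X) almost surely, where p, F : ℝᵖ → ℝ are measurable and R·ε is integrable. Then for all bounded measurable functions c, b : ℝᵖ → ℝ and every bounded measurable function h : ℝ × ℝᵖ → ℝ, E[ (R·ε·c(X) + (R − p(X))·(Z − F(X))·b(X)) · h(R, X) ] = 0. That is, elements of Λ⊥ are orthogonal in L² to every square-integrable function of (R, X), which covers the nuisance tangent spaces Λ_π, Λ_t and Λ_e of Proposition 2. -/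
open MeasureTheory ProbabilityTheory

private lemma key_int {Ω : Type*} [m0 : MeasurableSpace Ω] {μ : Measure Ω}
    [IsProbabilityMeasure μ] {m : MeasurableSpace Ω} (hm : m ≤ m0) {η V q : Ω → ℝ}
    (hη : StronglyMeasurable[m] η) (hV : Integrable V μ)
    (hηV : Integrable (fun ω => η ω * V ω) μ)
    (hq : μ[V|m] =ᵐ[μ] q) :
    ∫ ω, η ω * V ω ∂μ = ∫ ω, η ω * q ω ∂μ := by
  have hηV' : Integrable (η * V) μ := hηV
  have hpull : μ[η * V|m] =ᵐ[μ] η * μ[V|m] := condExp_mul_of_stronglyMeasurable_left hη hηV' hV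
  calc ∫ ω, η ω * V ω ∂μ = ∫ ω, (μ[η * V|m]) ω ∂μ := (integral_condExp hm (f := η * V)).symm
    _ = ∫ ω, η ω * q ω ∂μ := by
        refine integral_congr_ae (hpull.trans ?_)
        filter_upwards [hq] with ω hω
        simp only [Pi.mul_apply, hω]

private lemma abs_mul_le {a b A B : ℝ} (ha : |a| ≤ A) (hb : |b| ≤ B) : |a * b| ≤ A * B := by
  rw [abs_mul]
  exact mul_le_mul ha hb (abs_nonneg _) ((abs_nonneg a).trans ha)

/-- In the combined-data model, elements of `Λ⊥` are orthogonal in `L²` to every bounded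
measurable function of `(R, X)`, which covers the nuisance tangent spaces `Λ_π`, `Λ_t`, `Λ_e`. -/
theorem lambdaPerp_orthogonal_to_RX
    {Ω : Type*} [MeasurableSpace Ω] (μ : Measure Ω) [IsProbabilityMeasure μ]
    {d : ℕ} (X : Ω → (Fin d → ℝ)) (ε : Ω → ℝ) (R Z : Ω → ℝ)
    (hX : Measurable X) (hε : Measurable ε) (hR : Measurable R) (hZ : Measurable Z)
    (hR01 : ∀ ω, R ω = 0 ∨ R ω = 1) (hZ01 : ∀ ω, Z ω = 0 ∨ Z ω = 1)
    (p F : (Fin d → ℝ) → ℝ) (hp : Measurable p) (hF : Measurable F)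
    (h1 : μ[R | MeasurableSpace.comap X inferInstance] =ᵐ[μ] fun ω => p (X ω))
    (h2 : μ[fun ω => R ω * ε ω | MeasurableSpace.comap X inferInstance] =ᵐ[μ] 0)
    (h3 : μ[Z | MeasurableSpace.comap X inferInstance] =ᵐ[μ] fun ω => F (X ω))
    (h4 : μ[fun ω => R ω * Z ω | MeasurableSpace.comap X inferInstance]
        =ᵐ[μ] fun ω => p (X ω) * F (X ω))
    (hint : Integrable (fun ω => R ω * ε ω) μ) :
    ∀ c b : (Fin d → ℝ) → ℝ, Measurable c → Measurable b →
      (∃ C : ℝ, ∀ x, |c x| ≤ C) → (∃ C : ℝ, ∀ x, |b x| ≤ C) →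
      ∀ h : ℝ × (Fin d → ℝ) → ℝ, Measurable h → (∃ C : ℝ, ∀ y, |h y| ≤ C) →
      ∫ ω, (R ω * ε ω * c (X ω)
            + (R ω - p (X ω)) * (Z ω - F (X ω)) * b (X ω)) * h (R ω, X ω) ∂μ = 0 := by
  rintro c b hc hb ⟨Cc, hCc⟩ ⟨Cb, hCb⟩ h hh ⟨Ch, hCh⟩
  have hm : MeasurableSpace.comap X inferInstance ≤ ‹MeasurableSpace Ω› := hX.comap_le
  have hXm : Measurable[MeasurableSpace.comap X inferInstance] X :=
    Measurable.of_comap_le le_rfl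
  -- measurability of compositions with X, measurable w.r.t. m
  have hcompSM : ∀ q : (Fin d → ℝ) → ℝ, Measurable q →
      StronglyMeasurable[MeasurableSpace.comap X inferInstance] (fun ω => q (X ω)) := fun q hq =>
    (hq.comp hXm).stronglyMeasurable
  have hcomp : ∀ q : (Fin d → ℝ) → ℝ, Measurable q → Measurable (fun ω => q (X ω)) :=
    fun q hq => hq.comp hX
  -- slices of h
  have hh1 : Measurable (fun x : Fin d → ℝ => h (1, x)) := hh.comp measurable_prodMk_left
  have hh0 : Measurable (fun x : Fin d → ℝ => h (0, x)) := hh.comp measurable_prodMk_left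
  -- boundedness facts
  have hR1 : ∀ ω, |R ω| ≤ 1 := fun ω => by rcases hR01 ω with hr | hr <;> simp [hr]
  have hZ1 : ∀ ω, |Z ω| ≤ 1 := fun ω => by rcases hZ01 ω with hz | hz <;> simp [hz]
  -- integrability of basic variables
  have hRint : Integrable R μ :=
    (integrable_const (1:ℝ)).mono' hR.aestronglyMeasurable
      (Filter.Eventually.of_forall fun ω => by simpa using hR1 ω)
  have hZint : Integrable Z μ :=
    (integrable_const (1:ℝ)).mono' hZ.aestronglyMeasurable
      (Filter.Eventually.of_forall fun ω => by simpa using hZ1 ω)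
  have hRZint : Integrable (fun ω => R ω * Z ω) μ :=
    (integrable_const (1:ℝ)).mono' (hR.mul hZ).aestronglyMeasurable
      (Filter.Eventually.of_forall fun ω => by
        rw [Real.norm_eq_abs]
        exact (abs_mul_le (hR1 ω) (hZ1 ω)).trans (by norm_num))
  -- integrability of the conditional-mean functions
  have hpX : Integrable (fun ω => p (X ω)) μ := integrable_condExp.congr h1
  have hFX : Integrable (fun ω => F (X ω)) μ := integrable_condExp.congr h3
  have hpFX : Integrable (fun ω => p (X ω) * F (X ω)) μ := integrable_condExp.congr h4
  -- the seven terms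
  set η1 : Ω → ℝ := fun ω => c (X ω) * h (1, X ω) with hη1_def
  set η2 : Ω → ℝ := fun ω => b (X ω) * h (1, X ω) with hη2_def
  set η3 : Ω → ℝ := fun ω => F (X ω) * (b (X ω) * h (1, X ω)) with hη3_def
  set η4 : Ω → ℝ := fun ω => p (X ω) * (b (X ω) * h (0, X ω)) with hη4_def
  set T5 : Ω → ℝ := fun ω => p (X ω) * F (X ω) * (b (X ω) * h (0, X ω)) with hT5_def
  set η6 : Ω → ℝ := fun ω => p (X ω) * (b (X ω) * (h (1, X ω) - h (0, X ω))) with hη6_def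
  set η7 : Ω → ℝ :=
    fun ω => p (X ω) * F (X ω) * (b (X ω) * (h (1, X ω) - h (0, X ω))) with hη7_def
  have hbh1 : ∀ ω, |b (X ω) * h (1, X ω)| ≤ |Cb| * |Ch| := fun ω =>
    abs_mul_le ((hCb _).trans (le_abs_self _)) ((hCh _).trans (le_abs_self _))
  have hbh0 : ∀ ω, |b (X ω) * h (0, X ω)| ≤ |Cb| * |Ch| := fun ω =>
    abs_mul_le ((hCb _).trans (le_abs_self _)) ((hCh _).trans (le_abs_self _))
  have hbδ : ∀ ω, |b (X ω) * (h (1, X ω) - h (0, X ω))| ≤ |Cb| * (|Ch| + |Ch|) := fun ω =>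
    abs_mul_le ((hCb _).trans (le_abs_self _))
      ((abs_sub _ _).trans (add_le_add ((hCh _).trans (le_abs_self _))
        ((hCh _).trans (le_abs_self _))))
  -- strong measurability of the η's
  have hmη1 : StronglyMeasurable[MeasurableSpace.comap X inferInstance] η1 := hcompSM _ (hc.mul hh1)
  have hmη2 : StronglyMeasurable[MeasurableSpace.comap X inferInstance] η2 := hcompSM _ (hb.mul hh1)
  have hmη3 : StronglyMeasurable[MeasurableSpace.comap X inferInstance] η3 := hcompSM _ (hF.mul (hb.mul hh1))
  have hmη4 : StronglyMeasurable[MeasurableSpace.comap X inferInstance] η4 := hcompSM _ (hp.mul (hb.mul hh0))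
  have hmη6 : StronglyMeasurable[MeasurableSpace.comap X inferInstance] η6 := hcompSM _ (hp.mul (hb.mul (hh1.sub hh0)))
  have hmη7 : StronglyMeasurable[MeasurableSpace.comap X inferInstance] η7 := hcompSM _ ((hp.mul hF).mul (hb.mul (hh1.sub hh0)))
  -- integrability of each product term
  have hI1 : Integrable (fun ω => η1 ω * (R ω * ε ω)) μ :=
    hint.bdd_mul (hmη1.mono hm).aestronglyMeasurable
      (c := |Cc| * |Ch|) (Filter.Eventually.of_forall fun ω => by
        rw [Real.norm_eq_abs]
        exact abs_mul_le ((hCc _).trans (le_abs_self _)) ((hCh _).trans (le_abs_self _)))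
  have hI2 : Integrable (fun ω => η2 ω * (R ω * Z ω)) μ :=
    hRZint.bdd_mul (hmη2.mono hm).aestronglyMeasurable
      (c := |Cb| * |Ch|) (Filter.Eventually.of_forall fun ω => by rw [Real.norm_eq_abs]; exact hbh1 ω)
  have hI3 : Integrable (fun ω => η3 ω * R ω) μ := by
    refine (hFX.bdd_mul ((hcomp _ (hb.mul hh1)).mul hR).aestronglyMeasurable
      (c := |Cb| * |Ch|) (Filter.Eventually.of_forall fun ω => ?_)).congr (Filter.Eventually.of_forall fun ω => by
        simp only [hη3_def, Pi.mul_apply, Pi.sub_apply]; ring)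
    rw [Real.norm_eq_abs]
    exact (abs_mul_le (hbh1 ω) (hR1 ω)).trans (by rw [mul_one])
  have hI4 : Integrable (fun ω => η4 ω * Z ω) μ := by
    refine (hpX.bdd_mul ((hcomp _ (hb.mul hh0)).mul hZ).aestronglyMeasurable
      (c := |Cb| * |Ch|) (Filter.Eventually.of_forall fun ω => ?_)).congr (Filter.Eventually.of_forall fun ω => by
        simp only [hη4_def, Pi.mul_apply, Pi.sub_apply]; ring)
    rw [Real.norm_eq_abs]
    exact (abs_mul_le (hbh0 ω) (hZ1 ω)).trans (by rw [mul_one])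
  have hI5 : Integrable T5 μ := by
    refine (hpFX.bdd_mul (hcomp _ (hb.mul hh0)).aestronglyMeasurable
      (c := |Cb| * |Ch|) (Filter.Eventually.of_forall fun ω => ?_)).congr (Filter.Eventually.of_forall fun ω => by
        simp only [hT5_def, Pi.mul_apply, Pi.sub_apply]; ring)
    rw [Real.norm_eq_abs]
    exact hbh0 ω
  have hI6 : Integrable (fun ω => η6 ω * (R ω * Z ω)) μ := by
    refine (hpX.bdd_mul ((hcomp _ (hb.mul (hh1.sub hh0))).mul (hR.mul hZ)).aestronglyMeasurable
      (c := |Cb| * (|Ch| + |Ch|)) (Filter.Eventually.of_forall fun ω => ?_)).congr (Filter.Eventually.of_forall fun ω => by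
        simp only [hη6_def, Pi.mul_apply, Pi.sub_apply]; ring)
    rw [Real.norm_eq_abs]
    exact (abs_mul_le (hbδ ω) (show |R ω * Z ω| ≤ 1 from
      (abs_mul_le (hR1 ω) (hZ1 ω)).trans (by norm_num))).trans (by rw [mul_one])
  have hI7 : Integrable (fun ω => η7 ω * R ω) μ := by
    refine (hpFX.bdd_mul ((hcomp _ (hb.mul (hh1.sub hh0))).mul hR).aestronglyMeasurable
      (c := |Cb| * (|Ch| + |Ch|)) (Filter.Eventually.of_forall fun ω => ?_)).congr (Filter.Eventually.of_forall fun ω => by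
        simp only [hη7_def, Pi.mul_apply, Pi.sub_apply]; ring)
    rw [Real.norm_eq_abs]
    exact (abs_mul_le (hbδ ω) (hR1 ω)).trans (by rw [mul_one])
  -- the pointwise decomposition
  have split : (fun ω => (R ω * ε ω * c (X ω)
        + (R ω - p (X ω)) * (Z ω - F (X ω)) * b (X ω)) * h (R ω, X ω))
      = fun ω => η1 ω * (R ω * ε ω) + η2 ω * (R ω * Z ω) - η3 ω * R ω - η4 ω * Z ω
          + T5 ω - η6 ω * (R ω * Z ω) + η7 ω * R ω := by
    funext ω
    simp only [hη1_def, hη2_def, hη3_def, hη4_def, hT5_def, hη6_def, hη7_def]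
    rcases hR01 ω with hr | hr <;> rw [hr] <;> ring
  rw [split]
  have hA1 : Integrable (fun ω => η1 ω * (R ω * ε ω) + η2 ω * (R ω * Z ω)) μ := hI1.add hI2
  have hA2 : Integrable (fun ω => η1 ω * (R ω * ε ω) + η2 ω * (R ω * Z ω)
      - η3 ω * R ω) μ := hA1.sub hI3
  have hA3 : Integrable (fun ω => η1 ω * (R ω * ε ω) + η2 ω * (R ω * Z ω)
      - η3 ω * R ω - η4 ω * Z ω) μ := hA2.sub hI4
  have hA4 : Integrable (fun ω => η1 ω * (R ω * ε ω) + η2 ω * (R ω * Z ω)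
      - η3 ω * R ω - η4 ω * Z ω + T5 ω) μ := hA3.add hI5
  have hA5 : Integrable (fun ω => η1 ω * (R ω * ε ω) + η2 ω * (R ω * Z ω)
      - η3 ω * R ω - η4 ω * Z ω + T5 ω - η6 ω * (R ω * Z ω)) μ := hA4.sub hI6
  rw [integral_add hA5 hI7, integral_sub hA4 hI6, integral_add hA3 hI5,
      integral_sub hA2 hI4, integral_sub hA1 hI3, integral_add hI1 hI2]
  -- evaluate each integral via the conditional expectations
  have e1 : ∫ ω, η1 ω * (R ω * ε ω) ∂μ = 0 := by
    have := key_int hm hmη1 hint hI1 h2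
    simpa using this
  have e2 : ∫ ω, η2 ω * (R ω * Z ω) ∂μ = ∫ ω, η2 ω * (p (X ω) * F (X ω)) ∂μ :=
    key_int hm hmη2 hRZint hI2 h4
  have e3 : ∫ ω, η3 ω * R ω ∂μ = ∫ ω, η3 ω * p (X ω) ∂μ :=
    key_int hm hmη3 hRint hI3 h1
  have e4 : ∫ ω, η4 ω * Z ω ∂μ = ∫ ω, η4 ω * F (X ω) ∂μ :=
    key_int hm hmη4 hZint hI4 h3
  have e6 : ∫ ω, η6 ω * (R ω * Z ω) ∂μ = ∫ ω, η6 ω * (p (X ω) * F (X ω)) ∂μ :=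
    key_int hm hmη6 hRZint hI6 h4
  have e7 : ∫ ω, η7 ω * R ω ∂μ = ∫ ω, η7 ω * p (X ω) ∂μ :=
    key_int hm hmη7 hRint hI7 h1
  rw [e1, e2, e3, e4, e6, e7]
  have c23 : ∫ ω, η2 ω * (p (X ω) * F (X ω)) ∂μ = ∫ ω, η3 ω * p (X ω) ∂μ :=
    integral_congr_ae (Filter.Eventually.of_forall fun ω => by
      simp only [hη2_def, hη3_def]; ring)
  have c45 : ∫ ω, η4 ω * F (X ω) ∂μ = ∫ ω, T5 ω ∂μ :=
    integral_congr_ae (Filter.Eventually.of_forall fun ω => by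
      simp only [hη4_def, hT5_def]; ring)
  have c67 : ∫ ω, η6 ω * (p (X ω) * F (X ω)) ∂μ = ∫ ω, η7 ω * p (X ω) ∂μ :=
    integral_congr_ae (Filter.Eventually.of_forall fun ω => by
      simp only [hη6_def, hη7_def]; ring)
  rw [c23, c45, c67]
  ring
end

section
/- Let μ be a probability measure on Ω and let T, D : Ω → (Fin p → ℝ) be random vectors whose coordinates are square-integrable. Set Σ₁₂ := Cov(T, D) and Σ₂₂ := Var(D), assume Σ₂₂ is positive definite, let W := −Σ₁₂ · Σ₂₂⁻¹, and define B coordinatewise by Bᵢ := Tᵢ + ∑ⱼ Wᵢⱼ·Dⱼ. Then the p×p matrix with (i,j) entry cov(Tᵢ, Tⱼ) − cov(Bᵢ, Bⱼ) is positive semidefinite. -/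
open MeasureTheory Matrix

/-- Covariance of two real random variables: `cov(U, V) = E[(U − E U)(V − E V)]`. -/
noncomputable def cov {Ω : Type*} [MeasurableSpace Ω] (μ : Measure Ω) (U V : Ω → ℝ) : ℝ :=
  ∫ ω, (U ω - ∫ ω', U ω' ∂μ) * (V ω - ∫ ω', V ω' ∂μ) ∂μ

section Aux

variable {Ω : Type*} [MeasurableSpace Ω] {μ : Measure Ω} [IsProbabilityMeasure μ]

private lemma amgmExp : (1:ENNReal)/1 = 1/2 + 1/2 := by
  rw [ENNReal.div_add_div_same, one_add_one_eq_two,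
    ENNReal.div_self two_ne_zero ENNReal.ofNat_ne_top, one_div_one]

private lemma integrable_mul₂ {U V : Ω → ℝ} (hU : MemLp U 2 μ) (hV : MemLp V 2 μ) :
    Integrable (fun ω => U ω * V ω) μ := by
  rw [← memLp_one_iff_integrable]
  exact (hV.smul hU : MemLp (U • V) 1 μ)

private lemma memLp_sum {p : ℕ} (a : Fin p → ℝ) (f : Fin p → Ω → ℝ)
    (hf : ∀ i, MemLp (f i) 2 μ) :
    MemLp (fun ω => ∑ i, a i * f i ω) 2 μ :=
  memLp_finset_sum _ fun i _ => (hf i).const_mul (a i)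

private lemma integral_sum_mul {p : ℕ} (a : Fin p → ℝ) (f : Fin p → Ω → ℝ) (g : Ω → ℝ)
    (hf : ∀ i, MemLp (f i) 2 μ) (hg : MemLp g 2 μ) :
    ∫ ω, (∑ i, a i * f i ω) * g ω ∂μ = ∑ i, a i * ∫ ω, f i ω * g ω ∂μ := by
  have h1 : (fun ω => (∑ i, a i * f i ω) * g ω)
      = fun ω => ∑ i, a i * (f i ω * g ω) := by
    funext ω; rw [Finset.sum_mul]; simp_rw [mul_assoc]
  rw [h1, integral_finset_sum _ fun i _ => (integrable_mul₂ (hf i) hg).const_mul (a i)]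
  simp_rw [integral_const_mul]

private lemma integral_mul_sum {p : ℕ} (a : Fin p → ℝ) (f : Fin p → Ω → ℝ) (g : Ω → ℝ)
    (hf : ∀ i, MemLp (f i) 2 μ) (hg : MemLp g 2 μ) :
    ∫ ω, g ω * (∑ i, a i * f i ω) ∂μ = ∑ i, a i * ∫ ω, g ω * f i ω ∂μ := by
  have h1 : (fun ω => g ω * (∑ i, a i * f i ω))
      = fun ω => ∑ i, a i * (g ω * f i ω) := by
    funext ω; rw [Finset.mul_sum]; congr 1; funext i; ring
  rw [h1, integral_finset_sum _ fun i _ => (integrable_mul₂ hg (hf i)).const_mul (a i)]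
  simp_rw [integral_const_mul]

end Aux

/-- Guaranteed efficiency gain over `T`: with `W = −Sig12Sig22⁻¹` and `B = T + W·D`,
the matrix `Var(T) − Var(B)` is positive semidefinite. -/
theorem guaranteed_efficiency_gain
    {Ω : Type*} [MeasurableSpace Ω] (μ : Measure Ω) [IsProbabilityMeasure μ]
    {p : ℕ} (T D : Ω → (Fin p → ℝ))
    (hT : ∀ i, MemLp (fun ω => T ω i) 2 μ) (hD : ∀ i, MemLp (fun ω => D ω i) 2 μ)
    (Sig12 : Matrix (Fin p) (Fin p) ℝ)
    (hSig12 : Sig12 = Matrix.of fun i j => cov μ (fun ω => T ω i) (fun ω => D ω j))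
    (Sig22 : Matrix (Fin p) (Fin p) ℝ)
    (hSig22 : Sig22 = Matrix.of fun i j => cov μ (fun ω => D ω i) (fun ω => D ω j))
    (hpos : Sig22.PosDef)
    (W : Matrix (Fin p) (Fin p) ℝ) (hW : W = -(Sig12 * Sig22⁻¹))
    (B : Fin p → Ω → ℝ) (hB : ∀ i ω, B i ω = T ω i + ∑ j, W i j * D ω j) :
    (Matrix.of fun i j =>
      cov μ (fun ω => T ω i) (fun ω => T ω j) - cov μ (B i) (B j)).PosSemidef := by
  classical
  -- centered variables
  set X : Fin p → Ω → ℝ := fun i ω => T ω i - ∫ ω', T ω' i ∂μ with hXdef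
  set Y : Fin p → Ω → ℝ := fun i ω => D ω i - ∫ ω', D ω' i ∂μ with hYdef
  have hX : ∀ i, MemLp (X i) 2 μ := fun i => (hT i).sub (memLp_const _)
  have hY : ∀ i, MemLp (Y i) 2 μ := fun i => (hD i).sub (memLp_const _)
  set S : Fin p → Ω → ℝ := fun i ω => ∑ k, W i k * Y k ω with hSdef
  have hS : ∀ i, MemLp (S i) 2 μ := fun i => memLp_sum _ _ hY
  -- expectation of B
  have hEB : ∀ i, ∫ ω, B i ω ∂μ = (∫ ω', T ω' i ∂μ) + ∑ k, W i k * ∫ ω', D ω' k ∂μ := by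
    intro i
    have h1 : (fun ω => B i ω) = fun ω => T ω i + ∑ k, W i k * D ω k := by
      funext ω; exact hB i ω
    rw [h1, integral_add ((hT i).integrable one_le_two)
      (integrable_finset_sum _ fun k _ => ((hD k).integrable one_le_two).const_mul (W i k)),
      integral_finset_sum _ fun k _ => ((hD k).integrable one_le_two).const_mul (W i k)]
    simp_rw [integral_const_mul]
  -- centered B
  have hBc : ∀ i ω, B i ω - ∫ ω', B i ω' ∂μ = X i ω + S i ω := by
    intro i ω
    rw [hB i ω, hEB i]
    simp only [hXdef, hYdef, hSdef, mul_sub, Finset.sum_sub_distrib]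
    ring
  -- covariance identifications
  have hCovTT : ∀ i j, cov μ (fun ω => T ω i) (fun ω => T ω j) = ∫ ω, X i ω * X j ω ∂μ :=
    fun i j => rfl
  have hCovTD : ∀ i l, ∫ ω, X i ω * Y l ω ∂μ = Sig12 i l := by
    intro i l; rw [hSig12]; rfl
  have hCovDT : ∀ k j, ∫ ω, Y k ω * X j ω ∂μ = Sig12 j k := by
    intro k j
    rw [hSig12]
    show (∫ ω, Y k ω * X j ω ∂μ) = cov μ (fun ω => T ω j) (fun ω => D ω k)
    unfold cov
    congr 1; funext ω; ring
  have hCovDD : ∀ k l, ∫ ω, Y k ω * Y l ω ∂μ = Sig22 k l := by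
    intro k l; rw [hSig22]; rfl
  -- expansion of cov (B i) (B j)
  have key : ∀ i j, cov μ (B i) (B j) =
      (∫ ω, X i ω * X j ω ∂μ) + (Sig12 * Wᵀ) i j + (W * Sig12ᵀ) i j + (W * Sig22 * Wᵀ) i j := by
    intro i j
    have h0 : cov μ (B i) (B j) = ∫ ω, (X i ω + S i ω) * (X j ω + S j ω) ∂μ := by
      unfold cov
      congr 1; funext ω; rw [hBc i ω, hBc j ω]
    have expand : (fun ω => (X i ω + S i ω) * (X j ω + S j ω))
        = fun ω => ((X i ω * X j ω + X i ω * S j ω) + S i ω * X j ω) + S i ω * S j ω := by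
      funext ω; ring
    have i1 : Integrable (fun ω => X i ω * X j ω) μ := integrable_mul₂ (hX i) (hX j)
    have i2 : Integrable (fun ω => X i ω * S j ω) μ := integrable_mul₂ (hX i) (hS j)
    have i3 : Integrable (fun ω => S i ω * X j ω) μ := integrable_mul₂ (hS i) (hX j)
    have i4 : Integrable (fun ω => S i ω * S j ω) μ := integrable_mul₂ (hS i) (hS j)
    have A1 : ∫ ω, ((X i ω * X j ω + X i ω * S j ω) + S i ω * X j ω) + S i ω * S j ω ∂μ
        = (∫ ω, (X i ω * X j ω + X i ω * S j ω) + S i ω * X j ω ∂μ)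
          + ∫ ω, S i ω * S j ω ∂μ :=
      integral_add (by exact (i1.add i2).add i3) i4
    have A2 : ∫ ω, (X i ω * X j ω + X i ω * S j ω) + S i ω * X j ω ∂μ
        = (∫ ω, X i ω * X j ω + X i ω * S j ω ∂μ) + ∫ ω, S i ω * X j ω ∂μ :=
      integral_add (by exact i1.add i2) i3
    have A3 : ∫ ω, X i ω * X j ω + X i ω * S j ω ∂μ
        = (∫ ω, X i ω * X j ω ∂μ) + ∫ ω, X i ω * S j ω ∂μ := integral_add i1 i2
    rw [h0, expand, A1, A2, A3]
    have e2 : ∫ ω, X i ω * S j ω ∂μ = (Sig12 * Wᵀ) i j := by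
      rw [show (fun ω => X i ω * S j ω) = fun ω => X i ω * ∑ l, W j l * Y l ω from rfl]
      rw [integral_mul_sum _ _ _ hY (hX i)]
      simp_rw [hCovTD]
      rw [Matrix.mul_apply]
      simp [Matrix.transpose_apply, mul_comm]
    have e3 : ∫ ω, S i ω * X j ω ∂μ = (W * Sig12ᵀ) i j := by
      rw [show (fun ω => S i ω * X j ω) = fun ω => (∑ k, W i k * Y k ω) * X j ω from rfl]
      rw [integral_sum_mul _ _ _ hY (hX j)]
      simp_rw [hCovDT]
      rw [Matrix.mul_apply]
      simp [Matrix.transpose_apply]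
    have e4 : ∫ ω, S i ω * S j ω ∂μ = (W * Sig22 * Wᵀ) i j := by
      rw [show (fun ω => S i ω * S j ω) = fun ω => (∑ k, W i k * Y k ω) * S j ω from rfl]
      rw [integral_sum_mul _ _ _ hY (hS j)]
      have inner : ∀ k, ∫ ω, Y k ω * S j ω ∂μ = ∑ l, W j l * Sig22 k l := by
        intro k
        rw [show (fun ω => Y k ω * S j ω) = fun ω => Y k ω * ∑ l, W j l * Y l ω from rfl]
        rw [integral_mul_sum _ _ _ hY (hY k)]
        simp_rw [hCovDD]
      simp_rw [inner]
      rw [Matrix.mul_apply]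
      simp_rw [Matrix.mul_apply, Matrix.transpose_apply, Finset.mul_sum, Finset.sum_mul]
      rw [Finset.sum_comm]
      congr 1; funext k; congr 1; funext l; ring
    rw [e2, e3, e4]
  -- matrix algebra
  have hS22T : Sig22ᵀ = Sig22 := by
    have := hpos.1
    rwa [Matrix.IsHermitian, Matrix.conjTranspose_eq_transpose_of_trivial] at this
  have hinvT : Sig22⁻¹ᵀ = Sig22⁻¹ := by
    rw [Matrix.transpose_nonsing_inv, hS22T]
  have hdet : IsUnit Sig22.det := isUnit_iff_ne_zero.mpr hpos.det_pos.ne'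
  have hinvmul : Sig22⁻¹ * Sig22 = 1 := Matrix.nonsing_inv_mul _ hdet
  set M : Matrix (Fin p) (Fin p) ℝ := Sig12 * Sig22⁻¹ * Sig12ᵀ with hM
  have hWT : Wᵀ = -(Sig22⁻¹ * Sig12ᵀ) := by
    rw [hW, Matrix.transpose_neg, Matrix.transpose_mul, hinvT]
  have h1 : Sig12 * Wᵀ = -M := by
    rw [hWT, Matrix.mul_neg, hM, Matrix.mul_assoc]
  have h2 : W * Sig12ᵀ = -M := by
    rw [hW, Matrix.neg_mul, hM, Matrix.mul_assoc]
  have h3 : W * Sig22 * Wᵀ = M := by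
    rw [hWT, hW, Matrix.neg_mul, Matrix.neg_mul, Matrix.mul_neg, neg_neg, hM]
    rw [Matrix.mul_assoc Sig12 Sig22⁻¹ Sig22, hinvmul, Matrix.mul_one]
    rw [Matrix.mul_assoc]
  -- the matrix in question equals M
  have hmat : (Matrix.of fun i j =>
      cov μ (fun ω => T ω i) (fun ω => T ω j) - cov μ (B i) (B j)) = M := by
    ext i j
    rw [Matrix.of_apply, key i j, hCovTT, h1, h2, h3]
    simp [Matrix.neg_apply]
  rw [hmat, hM]
  have hinv : (Sig22⁻¹).PosSemidef := hpos.inv.posSemidef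
  have := hinv.mul_mul_conjTranspose_same Sig12
  rwa [Matrix.conjTranspose_eq_transpose_of_trivial] at this
end

section
/- Let μ be a probability measure on Ω and let T, D : Ω → (Fin p → ℝ) be random vectors whose coordinates are square-integrable. Set Σ₁₂ := Cov(T, D) and Σ₂₂ := Var(D), assume Σ₂₂ is invertible, let W := −Σ₁₂ · Σ₂₂⁻¹, define B coordinatewise by Bᵢ := Tᵢ + ∑ⱼ Wᵢⱼ·Dⱼ, and let S := T + D (coordinatewise sum). Then for all i, j ∈ Fin p, cov(Sᵢ, Sⱼ) − cov(Bᵢ, Bⱼ) = ((Σ₁₂ + Σ₂₂) · Σ₂₂⁻¹ · (Σ₁₂ + Σ₂₂)ᵀ)ᵢⱼ. -/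
open MeasureTheory Matrix

section Aux

variable {Ω : Type*} [MeasurableSpace Ω] {μ : Measure Ω} [IsProbabilityMeasure μ]
variable {U U' V : Ω → ℝ}

lemma aux_integrable_mul (hU : MemLp U 2 μ) (hV : MemLp V 2 μ) :
    Integrable (fun ω => U ω * V ω) μ := by
  have h : MemLp (U • V) 1 μ := hV.smul hU
  exact memLp_one_iff_integrable.mp h

lemma aux_memLp_center (hU : MemLp U 2 μ) :
    MemLp (fun ω => U ω - ∫ ω', U ω' ∂μ) 2 μ :=
  hU.sub (memLp_const _)

lemma aux_integrable_center_mul (hU : MemLp U 2 μ) (hV : MemLp V 2 μ) :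
    Integrable (fun ω => (U ω - ∫ ω', U ω' ∂μ) * (V ω - ∫ ω', V ω' ∂μ)) μ :=
  aux_integrable_mul (aux_memLp_center hU) (aux_memLp_center hV)

lemma cov_comm (U V : Ω → ℝ) : cov μ U V = cov μ V U := by
  unfold cov; congr 1; funext ω; ring

lemma cov_add_left (hU : MemLp U 2 μ) (hU' : MemLp U' 2 μ) (hV : MemLp V 2 μ) :
    cov μ (fun ω => U ω + U' ω) V = cov μ U V + cov μ U' V := by
  unfold cov
  have hi : (∫ ω, (U ω + U' ω) ∂μ) = (∫ ω, U ω ∂μ) + ∫ ω, U' ω ∂μ :=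
    integral_add (hU.integrable one_le_two) (hU'.integrable one_le_two)
  rw [← integral_add (aux_integrable_center_mul hU hV) (aux_integrable_center_mul hU' hV)]
  congr 1; funext ω; rw [hi]; ring

lemma cov_smul_left (c : ℝ) (hU : MemLp U 2 μ) (V : Ω → ℝ) :
    cov μ (fun ω => c * U ω) V = c * cov μ U V := by
  unfold cov
  rw [← integral_const_mul]
  congr 1; funext ω
  rw [integral_const_mul]; ring

lemma cov_zero_left (V : Ω → ℝ) : cov μ (fun _ => (0 : ℝ)) V = 0 := by
  unfold cov; simp

lemma cov_sum_left {ι : Type*} (s : Finset ι) (f : ι → Ω → ℝ)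
    (hf : ∀ k, MemLp (f k) 2 μ) (hV : MemLp V 2 μ) :
    cov μ (fun ω => ∑ k ∈ s, f k ω) V = ∑ k ∈ s, cov μ (f k) V := by
  classical
  induction s using Finset.induction_on with
  | empty => simpa using cov_zero_left (μ := μ) V
  | insert a s' hk ih =>
      rw [Finset.sum_insert hk]
      have hfun : (fun ω => ∑ k ∈ s', f k ω) = ∑ k ∈ s', f k := by
        funext ω; simp
      have hmem : MemLp (fun ω => ∑ k ∈ s', f k ω) 2 μ := by
        rw [hfun]; exact memLp_finsetSum' s' fun k _ => hf k
      have : cov μ (fun ω => f a ω + ∑ k ∈ s', f k ω) V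
          = cov μ (f a) V + cov μ (fun ω => ∑ k ∈ s', f k ω) V :=
        cov_add_left (hf a) hmem hV
      simp only [Finset.sum_insert hk]
      rw [this, ih]

lemma cov_add_right (hU : MemLp U 2 μ) (hV : MemLp V 2 μ) (hV' : MemLp U' 2 μ) :
    cov μ U (fun ω => V ω + U' ω) = cov μ U V + cov μ U U' := by
  rw [cov_comm, cov_add_left hV hV' hU, cov_comm V U, cov_comm U' U]

lemma cov_smul_right (c : ℝ) (U : Ω → ℝ) (hV : MemLp V 2 μ) :
    cov μ U (fun ω => c * V ω) = c * cov μ U V := by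
  rw [cov_comm, cov_smul_left c hV U, cov_comm]

lemma cov_sum_right {ι : Type*} (s : Finset ι) (f : ι → Ω → ℝ)
    (hf : ∀ k, MemLp (f k) 2 μ) (hV : MemLp V 2 μ) :
    cov μ V (fun ω => ∑ k ∈ s, f k ω) = ∑ k ∈ s, cov μ V (f k) := by
  rw [cov_comm, cov_sum_left s f hf hV]
  exact Finset.sum_congr rfl fun k _ => cov_comm _ _

end Aux

lemma matrix_identity {p : ℕ} (Sig12 Sig22 : Matrix (Fin p) (Fin p) ℝ)
    (hsym : Sig22ᵀ = Sig22) (hinv : IsUnit Sig22.det)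
    (W : Matrix (Fin p) (Fin p) ℝ) (hW : W = -(Sig12 * Sig22⁻¹)) :
    Sig12 + Sig12ᵀ + Sig22 - Sig12 * Wᵀ - W * Sig12ᵀ - W * Sig22 * Wᵀ
      = (Sig12 + Sig22) * Sig22⁻¹ * (Sig12 + Sig22)ᵀ := by
  have h1 : Sig22 * Sig22⁻¹ = 1 := Matrix.mul_nonsing_inv _ hinv
  have h2 : Sig22⁻¹ * Sig22 = 1 := Matrix.nonsing_inv_mul _ hinv
  have hinvsym : (Sig22⁻¹)ᵀ = Sig22⁻¹ := by
    rw [Matrix.transpose_nonsing_inv, hsym]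
  subst hW
  simp only [Matrix.transpose_neg, Matrix.transpose_mul, hinvsym, Matrix.transpose_add, hsym,
    Matrix.mul_neg, Matrix.neg_mul, neg_neg, sub_neg_eq_add,
    Matrix.add_mul, Matrix.mul_add, ← Matrix.mul_assoc,
    Matrix.mul_nonsing_inv_cancel_right _ _ hinv, Matrix.nonsing_inv_mul_cancel_right _ _ hinv,
    h1, h2, Matrix.one_mul, Matrix.mul_one]
  abel

/-- Variance-reduction identity over `S = T + D`: with `W = −Sig12Sig22⁻¹`, `B = T + W·D`,
`Cov(S)ᵢⱼ − Cov(B)ᵢⱼ = ((Sig12 + Sig22) Sig22⁻¹ (Sig12 + Sig22)ᵀ)ᵢⱼ`. -/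
theorem variance_reduction_identity_over_sum
    {Ω : Type*} [MeasurableSpace Ω] (μ : Measure Ω) [IsProbabilityMeasure μ]
    {p : ℕ} (T D : Ω → (Fin p → ℝ))
    (hT : ∀ i, MemLp (fun ω => T ω i) 2 μ) (hD : ∀ i, MemLp (fun ω => D ω i) 2 μ)
    (Sig12 : Matrix (Fin p) (Fin p) ℝ)
    (hSig12 : Sig12 = Matrix.of fun i j => cov μ (fun ω => T ω i) (fun ω => D ω j))
    (Sig22 : Matrix (Fin p) (Fin p) ℝ)
    (hSig22 : Sig22 = Matrix.of fun i j => cov μ (fun ω => D ω i) (fun ω => D ω j))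
    (hinv : IsUnit Sig22.det)
    (W : Matrix (Fin p) (Fin p) ℝ) (hW : W = -(Sig12 * Sig22⁻¹))
    (B : Fin p → Ω → ℝ) (hB : ∀ i ω, B i ω = T ω i + ∑ j, W i j * D ω j)
    (S : Ω → (Fin p → ℝ)) (hS : ∀ ω, S ω = T ω + D ω) :
    ∀ i j, cov μ (fun ω => S ω i) (fun ω => S ω j) - cov μ (B i) (B j)
      = ((Sig12 + Sig22) * Sig22⁻¹ * (Sig12 + Sig22)ᵀ) i j := by
  intro i j
  -- basic MemLp facts
  set G : Fin p → Ω → ℝ := fun i ω => ∑ k, W i k * D ω k with hG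
  have hGk : ∀ a k, MemLp (fun ω => W a k * D ω k) 2 μ := fun a k => (hD k).const_mul _
  have hGm : ∀ a, MemLp (G a) 2 μ := by
    intro a
    have hfun : G a = ∑ k, (fun ω => W a k * D ω k) := by
      funext ω; simp [hG]
    rw [hfun]
    exact memLp_finsetSum' _ fun k _ => hGk a k
  -- entry translations
  have e12 : ∀ a b, cov μ (fun ω => T ω a) (fun ω => D ω b) = Sig12 a b := by
    intro a b; rw [hSig12]; rfl
  have e21 : ∀ a b, cov μ (fun ω => D ω a) (fun ω => T ω b) = Sig12 b a := by
    intro a b; rw [cov_comm]; exact e12 b a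
  have e22 : ∀ a b, cov μ (fun ω => D ω a) (fun ω => D ω b) = Sig22 a b := by
    intro a b; rw [hSig22]; rfl
  -- expand cov of S
  have hSfun : ∀ a, (fun ω => S ω a) = fun ω => T ω a + D ω a := by
    intro a; funext ω; rw [hS]; rfl
  have hSexp : cov μ (fun ω => S ω i) (fun ω => S ω j)
      = cov μ (fun ω => T ω i) (fun ω => T ω j) + Sig12 i j + Sig12 j i + Sig22 i j := by
    have hTD : MemLp (fun ω => T ω j + D ω j) 2 μ := (hT j).add (hD j)
    rw [hSfun i, hSfun j, cov_add_left (hT i) (hD i) hTD,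
      cov_add_right (hT i) (hT j) (hD j), cov_add_right (hD i) (hT j) (hD j),
      e12, e21, e22]
    ring
  -- expand cov of B
  have hBfun : ∀ a, B a = fun ω => T ω a + G a ω := by
    intro a; funext ω; rw [hB]
  have covG_left : ∀ a (V : Ω → ℝ), MemLp V 2 μ →
      cov μ (G a) V = ∑ k, W a k * cov μ (fun ω => D ω k) V := by
    intro a V hV
    have := cov_sum_left (μ := μ) Finset.univ (fun k ω => W a k * D ω k) (hGk a) hV
    rw [hG]
    rw [this]
    exact Finset.sum_congr rfl fun k _ => cov_smul_left _ (hD k) _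
  have covG_right : ∀ a (V : Ω → ℝ), MemLp V 2 μ →
      cov μ V (G a) = ∑ k, W a k * cov μ V (fun ω => D ω k) := by
    intro a V hV
    rw [cov_comm, covG_left a V hV]
    exact Finset.sum_congr rfl fun k _ => by rw [cov_comm]
  have hBexp : cov μ (B i) (B j)
      = cov μ (fun ω => T ω i) (fun ω => T ω j)
        + (Sig12 * Wᵀ) i j + (W * Sig12ᵀ) i j + (W * Sig22 * Wᵀ) i j := by
    have hTG : MemLp (fun ω => T ω j + G j ω) 2 μ := (hT j).add (hGm j)
    rw [hBfun i, hBfun j,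
      cov_add_left (hT i) (hGm i) hTG,
      cov_add_right (hT i) (hT j) (hGm j),
      cov_add_right (μ := μ) (U := G i) (hGm i) (hT j) (hGm j),
      covG_right j _ (hT i), covG_left i _ (hT j), covG_left i _ (hGm j)]
    have t1 : (∑ k, W j k * cov μ (fun ω => T ω i) fun ω => D ω k) = (Sig12 * Wᵀ) i j := by
      rw [Matrix.mul_apply]
      exact Finset.sum_congr rfl fun k _ => by rw [e12, Matrix.transpose_apply]; ring
    have t2 : (∑ k, W i k * cov μ (fun ω => D ω k) fun ω => T ω j) = (W * Sig12ᵀ) i j := by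
      rw [Matrix.mul_apply]
      exact Finset.sum_congr rfl fun k _ => by rw [e21, Matrix.transpose_apply]
    have t3 : (∑ k, W i k * cov μ (fun ω => D ω k) (G j)) = (W * Sig22 * Wᵀ) i j := by
      rw [Matrix.mul_assoc, Matrix.mul_apply]
      refine Finset.sum_congr rfl fun k _ => ?_
      rw [covG_right j _ (hD k), Matrix.mul_apply, Finset.mul_sum, Finset.mul_sum]
      exact Finset.sum_congr rfl fun l _ => by rw [e22, Matrix.transpose_apply]; ring
    rw [t1, t2, t3]
    ring
  -- symmetry of Sig22
  have hsym : Sig22ᵀ = Sig22 := by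
    ext a b
    rw [Matrix.transpose_apply, ← e22, ← e22, cov_comm]
  have key := matrix_identity Sig12 Sig22 hsym hinv W hW
  have keyij := congrFun (congrFun key i) j
  rw [hSexp, hBexp, ← keyij]
  simp [Matrix.sub_apply, Matrix.add_apply, Matrix.transpose_apply]
  ring
end

section
/- In the combined-data model, let p, q, F : ℝᵖ → ℝ be measurable with 0 < F(x) < 1 for all x, let A : Ω → ℝ be a bounded random variable, and assume: (i) μ[R | 𝔪] = p(X) a.s.; (ii) μ[R·A | 𝔪] = 0 a.s.; (iii) μ[R·ε·A | 𝔪] = 0 a.s.; (iv) μ[R·Z·A | 𝔪] = p(X)·q(X) a.s.; (v) μ[R·Z | 𝔪] = p(X)·F(X) a.s.; (vi) μ[(1 − R)·Z | 𝔪] = (1 − p(X))·F(X) a.s.; and that R·ε is integrable. Then for all bounded measurable c, b : ℝᵖ → ℝ, E[ ( R·ε·c(X) + (R − p(X))·(Z − F(X))·b(X) ) · ( R·A + (1 − R)·(q(X)/F(X))·((Z − F(X))/(1 − F(X))) ) ] = 0. -/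
open MeasureTheory ProbabilityTheory Filter

set_option maxHeartbeats 1000000

section AuxOrtho

lemma aux_integral_mul_condexp {Ω : Type*} {m : MeasurableSpace Ω} [m0 : MeasurableSpace Ω]
    {μ : Measure Ω} [IsProbabilityMeasure μ] (hm : m ≤ m0) {g U : Ω → ℝ}
    (hg : StronglyMeasurable[m] g) (hU : Integrable U μ)
    (hgU : Integrable (fun ω => g ω * U ω) μ) :
    ∫ ω, g ω * U ω ∂μ = ∫ ω, g ω * (μ[U|m]) ω ∂μ := by
  calc ∫ ω, g ω * U ω ∂μ = ∫ ω, (μ[fun ω => g ω * U ω|m]) ω ∂μ := (integral_condExp hm).symm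
    _ = ∫ ω, g ω * (μ[U|m]) ω ∂μ := integral_congr_ae (condExp_mul_of_stronglyMeasurable_left hg hgU hU)

lemma aux_integrable_mul_s14 {Ω : Type*} {m : MeasurableSpace Ω} [m0 : MeasurableSpace Ω]
    {μ : Measure Ω} [IsProbabilityMeasure μ] (hm : m ≤ m0) {g U ψ : Ω → ℝ}
    (hg : Measurable[m] g) (hg0 : ∀ ω, 0 ≤ g ω)
    (hU : Measurable U) (hU0 : ∀ ω, 0 ≤ U ω) (hU1 : ∀ ω, U ω ≤ 1)
    (hce : μ[U|m] =ᵐ[μ] ψ) (hψ0 : 0 ≤ᵐ[μ] ψ) (hbd : ∀ᵐ ω ∂μ, ψ ω * g ω ≤ 1) :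
    Integrable (fun ω => g ω * U ω) μ := by
  have hgm : Measurable g := hg.mono hm le_rfl
  have hUint : Integrable U μ := by
    refine Integrable.mono' (integrable_const (1:ℝ)) hU.aestronglyMeasurable ?_
    exact Eventually.of_forall fun ω => by
      rw [Real.norm_of_nonneg (hU0 ω)]; exact hU1 ω
  have hψint : Integrable ψ μ := (integrable_condExp (m := m)).congr hce
  set gn : ℕ → Ω → ℝ := fun n ω => min (g ω) n with hgn_def
  have hgn_m : ∀ n, Measurable[m] (gn n) := fun n => hg.min measurable_const
  have hgn_nonneg : ∀ n ω, 0 ≤ gn n ω := fun n ω => le_min (hg0 ω) (Nat.cast_nonneg n)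
  have hgnU_int : ∀ n, Integrable (fun ω => gn n ω * U ω) μ := by
    intro n
    refine Integrable.mono' (integrable_const (n:ℝ))
      (((hgm.min measurable_const).mul hU).aestronglyMeasurable) ?_
    refine Eventually.of_forall fun ω => ?_
    rw [Real.norm_of_nonneg (mul_nonneg (hgn_nonneg n ω) (hU0 ω))]
    calc gn n ω * U ω ≤ gn n ω * 1 := mul_le_mul_of_nonneg_left (hU1 ω) (hgn_nonneg n ω)
      _ = gn n ω := mul_one _
      _ ≤ n := min_le_right _ _
  have key : ∀ n, ∫ ω, gn n ω * U ω ∂μ ≤ 1 := by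
    intro n
    rw [aux_integral_mul_condexp hm (hgn_m n).stronglyMeasurable hUint (hgnU_int n)]
    have e1 : ∫ ω, gn n ω * (μ[U|m]) ω ∂μ = ∫ ω, gn n ω * ψ ω ∂μ :=
      integral_congr_ae (by filter_upwards [hce] with ω h; rw [h])
    rw [e1]
    have hint2 : Integrable (fun ω => gn n ω * ψ ω) μ :=
      hψint.bdd_mul ((hgm.min measurable_const).aestronglyMeasurable)
        (c := n) (Eventually.of_forall fun ω => by
          rw [Real.norm_of_nonneg (hgn_nonneg n ω)]; exact min_le_right _ _)
    calc ∫ ω, gn n ω * ψ ω ∂μ ≤ ∫ _, (1:ℝ) ∂μ := by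
          refine integral_mono_ae hint2 (integrable_const 1) ?_
          filter_upwards [hψ0, hbd] with ω h0 hb
          calc gn n ω * ψ ω ≤ g ω * ψ ω :=
                mul_le_mul_of_nonneg_right (min_le_left _ _) h0
            _ = ψ ω * g ω := mul_comm _ _
            _ ≤ 1 := hb
      _ = 1 := by simp
  have hmeas : Measurable fun ω => g ω * U ω := hgm.mul hU
  refine ⟨hmeas.aestronglyMeasurable, ?_⟩
  rw [hasFiniteIntegral_iff_norm]
  have e2 : ∀ ω, ENNReal.ofReal ‖g ω * U ω‖ = ⨆ n : ℕ, ENNReal.ofReal (gn n ω * U ω) := by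
    intro ω
    rw [Real.norm_of_nonneg (mul_nonneg (hg0 ω) (hU0 ω))]
    refine le_antisymm ?_ (iSup_le fun n => ENNReal.ofReal_le_ofReal
      (mul_le_mul_of_nonneg_right (min_le_left _ _) (hU0 ω)))
    refine le_iSup_of_le ⌈g ω⌉₊ (le_of_eq ?_)
    have hmin : gn ⌈g ω⌉₊ ω = g ω := min_eq_left (Nat.le_ceil _)
    rw [hmin]
  calc ∫⁻ ω, ENNReal.ofReal ‖g ω * U ω‖ ∂μ
      = ∫⁻ ω, ⨆ n : ℕ, ENNReal.ofReal (gn n ω * U ω) ∂μ := lintegral_congr e2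
    _ = ⨆ n, ∫⁻ ω, ENNReal.ofReal (gn n ω * U ω) ∂μ := by
        refine lintegral_iSup (fun n => ?_) ?_
        · exact ((hgm.min measurable_const).mul hU).ennreal_ofReal
        · intro i j hij ω
          exact ENNReal.ofReal_le_ofReal (mul_le_mul_of_nonneg_right
            (min_le_min le_rfl (Nat.cast_le.mpr hij)) (hU0 ω))
    _ ≤ 1 := by
        refine iSup_le fun n => ?_
        rw [← ofReal_integral_eq_lintegral_ofReal (hgnU_int n)
          (Eventually.of_forall fun ω => mul_nonneg (hgn_nonneg n ω) (hU0 ω))]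
        calc ENNReal.ofReal (∫ ω, gn n ω * U ω ∂μ) ≤ ENNReal.ofReal 1 :=
              ENNReal.ofReal_le_ofReal (key n)
          _ = 1 := by simp
    _ < ⊤ := by simp

end AuxOrtho

/-- Every element of `Λ⊥ = { Rε c(X) + (R − p(X))(Z − F(X)) b(X) }` is orthogonal in `L²`
to every element of the error-distribution nuisance tangent space
`Λ_f = { R·a(ε,X) + (1 − R)(E(Za|X)/F)·(Z − F)/(1 − F) }`. -/
theorem lambdaPerp_orthogonal_to_Lambda_f
    {Ω : Type*} [MeasurableSpace Ω] (μ : Measure Ω) [IsProbabilityMeasure μ]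
    {d : ℕ} (X : Ω → (Fin d → ℝ)) (ε : Ω → ℝ) (R Z : Ω → ℝ)
    (hX : Measurable X) (hε : Measurable ε) (hR : Measurable R) (hZ : Measurable Z)
    (hR01 : ∀ ω, R ω = 0 ∨ R ω = 1) (hZ01 : ∀ ω, Z ω = 0 ∨ Z ω = 1)
    (p q F : (Fin d → ℝ) → ℝ) (hp : Measurable p) (hq : Measurable q) (hF : Measurable F)
    (hF01 : ∀ x, 0 < F x ∧ F x < 1)
    (A : Ω → ℝ) (hA : Measurable A) (hAbd : ∃ C : ℝ, ∀ ω, |A ω| ≤ C)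
    (h1 : μ[R | MeasurableSpace.comap X inferInstance] =ᵐ[μ] fun ω => p (X ω))
    (h2 : μ[fun ω => R ω * A ω | MeasurableSpace.comap X inferInstance] =ᵐ[μ] 0)
    (h3 : μ[fun ω => R ω * ε ω * A ω | MeasurableSpace.comap X inferInstance] =ᵐ[μ] 0)
    (h4 : μ[fun ω => R ω * Z ω * A ω | MeasurableSpace.comap X inferInstance]
        =ᵐ[μ] fun ω => p (X ω) * q (X ω))
    (h5 : μ[fun ω => R ω * Z ω | MeasurableSpace.comap X inferInstance]
        =ᵐ[μ] fun ω => p (X ω) * F (X ω))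
    (h6 : μ[fun ω => (1 - R ω) * Z ω | MeasurableSpace.comap X inferInstance]
        =ᵐ[μ] fun ω => (1 - p (X ω)) * F (X ω))
    (hint : Integrable (fun ω => R ω * ε ω) μ) :
    ∀ c b : (Fin d → ℝ) → ℝ, Measurable c → Measurable b →
      (∃ C : ℝ, ∀ x, |c x| ≤ C) → (∃ C : ℝ, ∀ x, |b x| ≤ C) →
      ∫ ω, (R ω * ε ω * c (X ω) + (R ω - p (X ω)) * (Z ω - F (X ω)) * b (X ω))
          * (R ω * A ω
             + (1 - R ω) * (q (X ω) / F (X ω)) * ((Z ω - F (X ω)) / (1 - F (X ω)))) ∂μ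
        = 0 := by
  intro c b hc hb hcbd hbbd
  obtain ⟨Ca₀, hCa₀⟩ := hAbd
  obtain ⟨Cc, hCc⟩ := hcbd
  obtain ⟨Cb₀, hCb₀⟩ := hbbd
  set Ca := max Ca₀ 0 with hCa_def
  have hCa : ∀ ω, |A ω| ≤ Ca := fun ω => le_trans (hCa₀ ω) (le_max_left _ _)
  have hCa0 : (0:ℝ) ≤ Ca := le_max_right _ _
  set Cb := max Cb₀ 0 with hCb_def
  have hCb : ∀ x, |b x| ≤ Cb := fun x => le_trans (hCb₀ x) (le_max_left _ _)
  have hCb0 : (0:ℝ) ≤ Cb := le_max_right _ _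
  have hCc0 : (0:ℝ) ≤ Cc := le_trans (abs_nonneg _) (hCc 0)
  have hm : MeasurableSpace.comap X inferInstance ≤ ‹MeasurableSpace Ω› := hX.comap_le
  have hXm : Measurable[MeasurableSpace.comap X inferInstance] X :=
    Measurable.of_comap_le le_rfl
  have hR0 : ∀ ω, 0 ≤ R ω ∧ R ω ≤ 1 := fun ω => by rcases hR01 ω with h | h <;> simp [h]
  have hZ0 : ∀ ω, 0 ≤ Z ω ∧ Z ω ≤ 1 := fun ω => by rcases hZ01 ω with h | h <;> simp [h]
  have hFx : ∀ x, 0 < F x := fun x => (hF01 x).1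
  have hF1 : ∀ x, F x < 1 := fun x => (hF01 x).2
  -- integrability of bounded measurable functions
  have intbdd : ∀ (f : Ω → ℝ), Measurable f → ∀ (C : ℝ), (∀ᵐ ω ∂μ, |f ω| ≤ C) →
      Integrable f μ := by
    intro f hf C h
    exact Integrable.mono' (integrable_const C) hf.aestronglyMeasurable
      (h.mono fun ω hω => by rwa [Real.norm_eq_abs])
  have hRint : Integrable R μ :=
    intbdd R hR 1 (Eventually.of_forall fun ω => by rcases hR01 ω with h | h <;> simp [h])
  -- a.e. bounds on p and p*q
  have hp01 : ∀ᵐ ω ∂μ, 0 ≤ p (X ω) ∧ p (X ω) ≤ 1 := by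
    have h0 : (0:Ω → ℝ) ≤ᵐ[μ] μ[R|MeasurableSpace.comap X inferInstance] :=
      condExp_nonneg (Eventually.of_forall fun ω => (hR0 ω).1)
    have hle : μ[R|MeasurableSpace.comap X inferInstance]
        ≤ᵐ[μ] μ[fun _ : Ω => (1:ℝ)|MeasurableSpace.comap X inferInstance] :=
      condExp_mono hRint (integrable_const 1) (Eventually.of_forall fun ω => (hR0 ω).2)
    rw [condExp_const hm] at hle
    filter_upwards [h0, hle, h1] with ω h0ω hleω h1ω
    rw [← h1ω]
    exact ⟨by simpa using h0ω, by simpa using hleω⟩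
  have hRZA : ∀ ω, |R ω * Z ω * A ω| ≤ Ca := fun ω => by
    rcases hR01 ω with h | h <;> rcases hZ01 ω with h' | h' <;> simp [h, h', hCa0, hCa ω]
  have hRA : ∀ ω, |R ω * A ω| ≤ Ca := fun ω => by
    rcases hR01 ω with h | h <;> simp [h, hCa0, hCa ω]
  have hpq : ∀ᵐ ω ∂μ, |p (X ω) * q (X ω)| ≤ Ca := by
    have hbd : ∀ᵐ ω ∂μ, |R ω * Z ω * A ω| ≤ (Ca.toNNReal : ℝ) := by
      refine Eventually.of_forall fun ω => ?_
      rw [Real.coe_toNNReal _ hCa0]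
      exact hRZA ω
    have h' := ae_bdd_condExp_of_ae_bdd (m := MeasurableSpace.comap X inferInstance) hbd
    filter_upwards [h', h4] with ω hω h4ω
    rw [← h4ω]
    exact le_trans hω (le_of_eq (Real.coe_toNNReal _ hCa0))
  -- strongly measurable coefficients
  have smc : ∀ {φ : (Fin d → ℝ) → ℝ}, Measurable φ →
      StronglyMeasurable[MeasurableSpace.comap X inferInstance] (fun ω => φ (X ω)) :=
    fun hφ => (hφ.comp hXm).stronglyMeasurable
  -- integrability of the U's
  have iU1 : Integrable (fun ω => R ω * ε ω * A ω) μ := by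
    refine Integrable.mono' (hint.abs.const_mul Ca)
      ((hR.mul hε).mul hA).aestronglyMeasurable ?_
    refine Eventually.of_forall fun ω => ?_
    rw [Real.norm_eq_abs, abs_mul]
    calc |R ω * ε ω| * |A ω| ≤ |R ω * ε ω| * Ca :=
          mul_le_mul_of_nonneg_left (hCa ω) (abs_nonneg _)
      _ = Ca * |R ω * ε ω| := mul_comm _ _
  have iU2 : Integrable (fun ω => R ω * Z ω * A ω) μ :=
    intbdd _ ((hR.mul hZ).mul hA) Ca (Eventually.of_forall hRZA)
  have iU3 : Integrable (fun ω => R ω * A ω) μ :=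
    intbdd _ (hR.mul hA) Ca (Eventually.of_forall hRA)
  have iU4 : Integrable (fun ω => (1 - R ω) * Z ω) μ := by
    refine intbdd _ ((measurable_const.sub hR).mul hZ) 1 (Eventually.of_forall fun ω => ?_)
    rcases hR01 ω with h | h <;> rcases hZ01 ω with h' | h' <;> simp [h, h']
  have iU5 : Integrable (fun ω => (1 - R ω) * (1 - Z ω)) μ := by
    refine intbdd _ ((measurable_const.sub hR).mul (measurable_const.sub hZ)) 1
      (Eventually.of_forall fun ω => ?_)
    rcases hR01 ω with h | h <;> rcases hZ01 ω with h' | h' <;> simp [h, h']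
  have i1R : Integrable (fun ω => 1 - R ω) μ := by
    refine intbdd _ (measurable_const.sub hR) 1 (Eventually.of_forall fun ω => ?_)
    rcases hR01 ω with h | h <;> simp [h]
  -- conditional expectation of U5
  have hce5 : μ[fun ω => (1 - R ω) * (1 - Z ω)|MeasurableSpace.comap X inferInstance]
      =ᵐ[μ] fun ω => (1 - p (X ω)) * (1 - F (X ω)) := by
    have heq : (fun ω => (1 - R ω) * (1 - Z ω))
        = (fun ω => 1 - R ω) - (fun ω => (1 - R ω) * Z ω) := by
      funext ω; simp only [Pi.sub_apply]; ring
    rw [heq]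
    refine (condExp_sub i1R iU4 _).trans ?_
    have e3 : μ[fun ω => 1 - R ω|MeasurableSpace.comap X inferInstance]
        =ᵐ[μ] fun ω => 1 - p (X ω) := by
      have heq2 : (fun ω => 1 - R ω) = (fun _ : Ω => (1:ℝ)) - R := by funext ω; simp
      rw [heq2]
      refine (condExp_sub (integrable_const 1) hRint _).trans ?_
      rw [condExp_const hm]
      filter_upwards [h1] with ω hω
      simp [Pi.sub_apply, hω]
    filter_upwards [e3, h6] with ω h3ω h6ω
    simp only [Pi.sub_apply]
    rw [h3ω, h6ω]
    ring
  -- integrability of the ratio terms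
  have iV4 : Integrable (fun ω => ((1 - F (X ω)) / F (X ω)) * ((1 - R ω) * Z ω)) μ := by
    refine aux_integrable_mul_s14 hm (ψ := fun ω => (1 - p (X ω)) * F (X ω))
      ((measurable_const.sub (hF.comp hXm)).div (hF.comp hXm))
      (fun ω => div_nonneg (by linarith [hF1 (X ω)]) (hFx (X ω)).le)
      ((measurable_const.sub hR).mul hZ)
      (fun ω => mul_nonneg (by linarith [(hR0 ω).2]) (hZ0 ω).1)
      (fun ω => ?_) h6 ?_ ?_
    · rcases hR01 ω with h | h <;> rcases hZ01 ω with h' | h' <;> simp [h, h']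
    · filter_upwards [hp01] with ω hω
      exact mul_nonneg (by linarith [hω.2]) (hFx (X ω)).le
    · filter_upwards [hp01] with ω hω
      have he : (1 - p (X ω)) * F (X ω) * ((1 - F (X ω)) / F (X ω))
          = (1 - p (X ω)) * (1 - F (X ω)) := by
        have h0 : F (X ω) ≠ 0 := ne_of_gt (hFx (X ω))
        field_simp
      rw [he]
      nlinarith [hFx (X ω), hF1 (X ω), hω.1, hω.2]
  have iV5 : Integrable (fun ω => (F (X ω) / (1 - F (X ω))) * ((1 - R ω) * (1 - Z ω))) μ := by
    refine aux_integrable_mul_s14 hm (ψ := fun ω => (1 - p (X ω)) * (1 - F (X ω)))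
      ((hF.comp hXm).div (measurable_const.sub (hF.comp hXm)))
      (fun ω => div_nonneg (hFx (X ω)).le (by linarith [hF1 (X ω)]))
      ((measurable_const.sub hR).mul (measurable_const.sub hZ))
      (fun ω => mul_nonneg (by linarith [(hR0 ω).2]) (by linarith [(hZ0 ω).2]))
      (fun ω => ?_) hce5 ?_ ?_
    · rcases hR01 ω with h | h <;> rcases hZ01 ω with h' | h' <;> simp [h, h']
    · filter_upwards [hp01] with ω hω
      exact mul_nonneg (by linarith [hω.2]) (by linarith [hF1 (X ω)])
    · filter_upwards [hp01] with ω hω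
      have he : (1 - p (X ω)) * (1 - F (X ω)) * (F (X ω) / (1 - F (X ω)))
          = (1 - p (X ω)) * F (X ω) := by
        have h0 : (1:ℝ) - F (X ω) ≠ 0 := by linarith [hF1 (X ω)]
        field_simp
      rw [he]
      nlinarith [hFx (X ω), hF1 (X ω), hω.1, hω.2]
  -- integrability of the five product terms
  have igU1 : Integrable (fun ω => c (X ω) * (R ω * ε ω * A ω)) μ := by
    refine Integrable.mono' ((hint.abs.const_mul Ca).const_mul Cc)
      ((hc.comp hX).mul ((hR.mul hε).mul hA)).aestronglyMeasurable ?_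
    refine Eventually.of_forall fun ω => ?_
    rw [Real.norm_eq_abs, abs_mul, abs_mul]
    calc |c (X ω)| * (|R ω * ε ω| * |A ω|) ≤ Cc * (|R ω * ε ω| * Ca) := by
          refine mul_le_mul (hCc _) (mul_le_mul_of_nonneg_left (hCa ω) (abs_nonneg _))
            (by positivity) hCc0
      _ = Cc * (Ca * |R ω * ε ω|) := by ring
  have igU2 : Integrable (fun ω => ((1 - p (X ω)) * b (X ω)) * (R ω * Z ω * A ω)) μ := by
    refine intbdd _ (((measurable_const.sub (hp.comp hX)).mul (hb.comp hX)).mul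
      ((hR.mul hZ).mul hA)) (Cb * Ca) ?_
    filter_upwards [hp01] with ω hω
    have h1p : |1 - p (X ω)| ≤ 1 := abs_le.mpr ⟨by linarith [hω.2], by linarith [hω.1]⟩
    rw [abs_mul, abs_mul]
    calc |1 - p (X ω)| * |b (X ω)| * |R ω * Z ω * A ω| ≤ 1 * Cb * Ca := by
          refine mul_le_mul (mul_le_mul h1p (hCb _) (abs_nonneg _) zero_le_one)
            (hRZA ω) (abs_nonneg _) (by positivity)
      _ = Cb * Ca := by ring
  have igU3 : Integrable (fun ω => (-(F (X ω) * (1 - p (X ω)) * b (X ω))) * (R ω * A ω)) μ := by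
    refine intbdd _ ((((hF.comp hX).mul (measurable_const.sub (hp.comp hX))).mul
      (hb.comp hX)).neg.mul (hR.mul hA)) (Cb * Ca) ?_
    filter_upwards [hp01] with ω hω
    have h1p : |1 - p (X ω)| ≤ 1 := abs_le.mpr ⟨by linarith [hω.2], by linarith [hω.1]⟩
    have hFb : |F (X ω)| ≤ 1 := abs_le.mpr ⟨by linarith [hFx (X ω)], (hF1 (X ω)).le⟩
    rw [abs_mul, abs_neg, abs_mul, abs_mul]
    calc |F (X ω)| * |1 - p (X ω)| * |b (X ω)| * |R ω * A ω| ≤ 1 * 1 * Cb * Ca := by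
          refine mul_le_mul (mul_le_mul (mul_le_mul hFb h1p (abs_nonneg _) zero_le_one)
            (hCb _) (abs_nonneg _) (by positivity)) (hRA ω) (abs_nonneg _) (by positivity)
      _ = Cb * Ca := by ring
  have igU4 : Integrable (fun ω =>
      (-(p (X ω) * q (X ω) * b (X ω) * (1 - F (X ω)) / F (X ω))) * ((1 - R ω) * Z ω)) μ := by
    have hmeas4 : Measurable (fun ω =>
        (-(p (X ω) * q (X ω) * b (X ω) * (1 - F (X ω)) / F (X ω))) * ((1 - R ω) * Z ω)) :=
      Measurable.mul
        (Measurable.neg (((((hp.comp hX).mul (hq.comp hX)).mul (hb.comp hX)).mul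
          (measurable_const.sub (hF.comp hX))).div (hF.comp hX)))
        ((measurable_const.sub hR).mul hZ)
    refine Integrable.mono' (iV4.abs.const_mul (Ca * Cb)) hmeas4.aestronglyMeasurable ?_
    filter_upwards [hpq] with ω hω
    have he : (-(p (X ω) * q (X ω) * b (X ω) * (1 - F (X ω)) / F (X ω))) * ((1 - R ω) * Z ω)
        = -((p (X ω) * q (X ω)) * b (X ω)
            * (((1 - F (X ω)) / F (X ω)) * ((1 - R ω) * Z ω))) := by ring
    rw [Real.norm_eq_abs, he, abs_neg, abs_mul, abs_mul]
    calc |p (X ω) * q (X ω)| * |b (X ω)| * |((1 - F (X ω)) / F (X ω)) * ((1 - R ω) * Z ω)|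
        ≤ Ca * Cb * |((1 - F (X ω)) / F (X ω)) * ((1 - R ω) * Z ω)| := by
          refine mul_le_mul_of_nonneg_right
            (mul_le_mul hω (hCb _) (abs_nonneg _) hCa0) (abs_nonneg _)
      _ = Ca * Cb * |((1 - F (X ω)) / F (X ω)) * ((1 - R ω) * Z ω)| := rfl
  have igU5 : Integrable (fun ω =>
      (-(p (X ω) * q (X ω) * b (X ω) * F (X ω) / (1 - F (X ω))))
        * ((1 - R ω) * (1 - Z ω))) μ := by
    have hmeas5 : Measurable (fun ω =>
        (-(p (X ω) * q (X ω) * b (X ω) * F (X ω) / (1 - F (X ω))))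
          * ((1 - R ω) * (1 - Z ω))) :=
      Measurable.mul
        (Measurable.neg (((((hp.comp hX).mul (hq.comp hX)).mul (hb.comp hX)).mul
          (hF.comp hX)).div (measurable_const.sub (hF.comp hX))))
        ((measurable_const.sub hR).mul (measurable_const.sub hZ))
    refine Integrable.mono' (iV5.abs.const_mul (Ca * Cb)) hmeas5.aestronglyMeasurable ?_
    filter_upwards [hpq] with ω hω
    have he : (-(p (X ω) * q (X ω) * b (X ω) * F (X ω) / (1 - F (X ω))))
          * ((1 - R ω) * (1 - Z ω))
        = -((p (X ω) * q (X ω)) * b (X ω)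
            * ((F (X ω) / (1 - F (X ω))) * ((1 - R ω) * (1 - Z ω)))) := by ring
    rw [Real.norm_eq_abs, he, abs_neg, abs_mul, abs_mul]
    exact mul_le_mul_of_nonneg_right (mul_le_mul hω (hCb _) (abs_nonneg _) hCa0) (abs_nonneg _)
  -- pointwise decomposition
  have hpoint : ∀ ω, (R ω * ε ω * c (X ω) + (R ω - p (X ω)) * (Z ω - F (X ω)) * b (X ω))
          * (R ω * A ω
             + (1 - R ω) * (q (X ω) / F (X ω)) * ((Z ω - F (X ω)) / (1 - F (X ω))))
      = c (X ω) * (R ω * ε ω * A ω)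
        + ((1 - p (X ω)) * b (X ω)) * (R ω * Z ω * A ω)
        + (-(F (X ω) * (1 - p (X ω)) * b (X ω))) * (R ω * A ω)
        + (-(p (X ω) * q (X ω) * b (X ω) * (1 - F (X ω)) / F (X ω))) * ((1 - R ω) * Z ω)
        + (-(p (X ω) * q (X ω) * b (X ω) * F (X ω) / (1 - F (X ω))))
            * ((1 - R ω) * (1 - Z ω)) := by
    intro ω
    have hF0 := (hF01 (X ω)).1
    have hF1' := (hF01 (X ω)).2
    have hFne : F (X ω) ≠ 0 := ne_of_gt hF0
    have hFne1 : (1 : ℝ) - F (X ω) ≠ 0 := ne_of_gt (by linarith)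
    rcases hR01 ω with h | h <;> rcases hZ01 ω with h' | h' <;> rw [h, h'] <;>
      field_simp <;> first
      | ring1
      | (left; ring1)
      | (left; trivial)
  -- evaluate the five integrals
  have E1 : ∫ ω, c (X ω) * (R ω * ε ω * A ω) ∂μ = 0 := by
    rw [aux_integral_mul_condexp hm (smc hc) iU1 igU1]
    calc ∫ ω, c (X ω) * (μ[fun ω => R ω * ε ω * A ω|MeasurableSpace.comap X inferInstance]) ω ∂μ
        = ∫ _, (0:ℝ) ∂μ := by
          refine integral_congr_ae ?_
          filter_upwards [h3] with ω hω
          simp only [hω, Pi.zero_apply, mul_zero]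
      _ = 0 := integral_zero _ _
  have E3 : ∫ ω, (-(F (X ω) * (1 - p (X ω)) * b (X ω))) * (R ω * A ω) ∂μ = 0 := by
    rw [aux_integral_mul_condexp hm
      (smc (show Measurable fun x => -(F x * (1 - p x) * b x) from ((hF.mul (measurable_const.sub hp)).mul hb).neg)) iU3 igU3]
    calc ∫ ω, (-(F (X ω) * (1 - p (X ω)) * b (X ω)))
          * (μ[fun ω => R ω * A ω|MeasurableSpace.comap X inferInstance]) ω ∂μ
        = ∫ _, (0:ℝ) ∂μ := by
          refine integral_congr_ae ?_
          filter_upwards [h2] with ω hω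
          simp only [hω, Pi.zero_apply, mul_zero]
      _ = 0 := integral_zero _ _
  have E2 : ∫ ω, ((1 - p (X ω)) * b (X ω)) * (R ω * Z ω * A ω) ∂μ
      = ∫ ω, ((1 - p (X ω)) * b (X ω)) * (p (X ω) * q (X ω)) ∂μ := by
    rw [aux_integral_mul_condexp hm (smc (show Measurable fun x => (1 - p x) * b x from (measurable_const.sub hp).mul hb)) iU2 igU2]
    refine integral_congr_ae ?_
    filter_upwards [h4] with ω hω
    rw [hω]
  have E4 : ∫ ω, (-(p (X ω) * q (X ω) * b (X ω) * (1 - F (X ω)) / F (X ω)))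
        * ((1 - R ω) * Z ω) ∂μ
      = ∫ ω, -(p (X ω) * q (X ω) * b (X ω) * (1 - p (X ω)) * (1 - F (X ω))) ∂μ := by
    rw [aux_integral_mul_condexp hm
      (smc (show Measurable fun x => -(p x * q x * b x * (1 - F x) / F x) from (((hp.mul hq).mul hb).mul (measurable_const.sub hF)).div hF |>.neg)) iU4 igU4]
    refine integral_congr_ae ?_
    filter_upwards [h6] with ω hω
    rw [hω]
    have hFne : F (X ω) ≠ 0 := ne_of_gt (hFx (X ω))
    field_simp
  have E5 : ∫ ω, (-(p (X ω) * q (X ω) * b (X ω) * F (X ω) / (1 - F (X ω))))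
        * ((1 - R ω) * (1 - Z ω)) ∂μ
      = ∫ ω, -(p (X ω) * q (X ω) * b (X ω) * (1 - p (X ω)) * F (X ω)) ∂μ := by
    rw [aux_integral_mul_condexp hm
      (smc (show Measurable fun x => -(p x * q x * b x * F x / (1 - F x)) from (((hp.mul hq).mul hb).mul hF).div (measurable_const.sub hF) |>.neg)) iU5 igU5]
    refine integral_congr_ae ?_
    filter_upwards [hce5] with ω hω
    rw [hω]
    have hFne1 : (1:ℝ) - F (X ω) ≠ 0 := ne_of_gt (by linarith [hF1 (X ω)])
    field_simp
  -- integrability of the three remaining coefficient functions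
  have if2 : Integrable (fun ω => ((1 - p (X ω)) * b (X ω)) * (p (X ω) * q (X ω))) μ := by
    refine intbdd _ (((measurable_const.sub (hp.comp hX)).mul (hb.comp hX)).mul
      ((hp.comp hX).mul (hq.comp hX))) (Cb * Ca) ?_
    filter_upwards [hp01, hpq] with ω hω hωq
    have h1p : |1 - p (X ω)| ≤ 1 := abs_le.mpr ⟨by linarith [hω.2], by linarith [hω.1]⟩
    rw [abs_mul, abs_mul]
    calc |1 - p (X ω)| * |b (X ω)| * |p (X ω) * q (X ω)| ≤ 1 * Cb * Ca := by
          refine mul_le_mul (mul_le_mul h1p (hCb _) (abs_nonneg _) zero_le_one)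
            hωq (abs_nonneg _) (by positivity)
      _ = Cb * Ca := by ring
  have if4 : Integrable
      (fun ω => -(p (X ω) * q (X ω) * b (X ω) * (1 - p (X ω)) * (1 - F (X ω)))) μ := by
    refine intbdd _ (((((hp.comp hX).mul (hq.comp hX)).mul (hb.comp hX)).mul
      (measurable_const.sub (hp.comp hX))).mul (measurable_const.sub (hF.comp hX))).neg
      (Ca * Cb) ?_
    filter_upwards [hp01, hpq] with ω hω hωq
    have h1p : |1 - p (X ω)| ≤ 1 := abs_le.mpr ⟨by linarith [hω.2], by linarith [hω.1]⟩
    have h1F : |1 - F (X ω)| ≤ 1 :=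
      abs_le.mpr ⟨by linarith [hF1 (X ω)], by linarith [hFx (X ω)]⟩
    have he : -(p (X ω) * q (X ω) * b (X ω) * (1 - p (X ω)) * (1 - F (X ω)))
        = -((p (X ω) * q (X ω)) * b (X ω) * ((1 - p (X ω)) * (1 - F (X ω)))) := by ring
    rw [he, abs_neg, abs_mul, abs_mul]
    calc |p (X ω) * q (X ω)| * |b (X ω)| * |(1 - p (X ω)) * (1 - F (X ω))|
        ≤ Ca * Cb * 1 := by
          refine mul_le_mul (mul_le_mul hωq (hCb _) (abs_nonneg _) hCa0) ?_
            (abs_nonneg _) (by positivity)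
          rw [abs_mul]
          exact mul_le_one₀ h1p (abs_nonneg _) h1F
      _ = Ca * Cb := by ring
  have if5 : Integrable
      (fun ω => -(p (X ω) * q (X ω) * b (X ω) * (1 - p (X ω)) * F (X ω))) μ := by
    refine intbdd _ (((((hp.comp hX).mul (hq.comp hX)).mul (hb.comp hX)).mul
      (measurable_const.sub (hp.comp hX))).mul (hF.comp hX)).neg (Ca * Cb) ?_
    filter_upwards [hp01, hpq] with ω hω hωq
    have h1p : |1 - p (X ω)| ≤ 1 := abs_le.mpr ⟨by linarith [hω.2], by linarith [hω.1]⟩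
    have hFb : |F (X ω)| ≤ 1 := abs_le.mpr ⟨by linarith [hFx (X ω)], (hF1 (X ω)).le⟩
    have he : -(p (X ω) * q (X ω) * b (X ω) * (1 - p (X ω)) * F (X ω))
        = -((p (X ω) * q (X ω)) * b (X ω) * ((1 - p (X ω)) * F (X ω))) := by ring
    rw [he, abs_neg, abs_mul, abs_mul]
    calc |p (X ω) * q (X ω)| * |b (X ω)| * |(1 - p (X ω)) * F (X ω)|
        ≤ Ca * Cb * 1 := by
          refine mul_le_mul (mul_le_mul hωq (hCb _) (abs_nonneg _) hCa0) ?_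
            (abs_nonneg _) (by positivity)
          rw [abs_mul]
          exact mul_le_one₀ h1p (abs_nonneg _) hFb
      _ = Ca * Cb := by ring
  -- the three nonzero integrals sum to zero
  have final : ∫ ω, ((1 - p (X ω)) * b (X ω)) * (p (X ω) * q (X ω)) ∂μ
      + ∫ ω, -(p (X ω) * q (X ω) * b (X ω) * (1 - p (X ω)) * (1 - F (X ω))) ∂μ
      + ∫ ω, -(p (X ω) * q (X ω) * b (X ω) * (1 - p (X ω)) * F (X ω)) ∂μ = 0 := by
    have e1 : ∫ ω, (((1 - p (X ω)) * b (X ω)) * (p (X ω) * q (X ω))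
          + -(p (X ω) * q (X ω) * b (X ω) * (1 - p (X ω)) * (1 - F (X ω)))) ∂μ
        = ∫ ω, ((1 - p (X ω)) * b (X ω)) * (p (X ω) * q (X ω)) ∂μ
          + ∫ ω, -(p (X ω) * q (X ω) * b (X ω) * (1 - p (X ω)) * (1 - F (X ω))) ∂μ :=
      integral_add if2 if4
    have e2 : ∫ ω, ((((1 - p (X ω)) * b (X ω)) * (p (X ω) * q (X ω))
          + -(p (X ω) * q (X ω) * b (X ω) * (1 - p (X ω)) * (1 - F (X ω))))
          + -(p (X ω) * q (X ω) * b (X ω) * (1 - p (X ω)) * F (X ω))) ∂μ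
        = ∫ ω, (((1 - p (X ω)) * b (X ω)) * (p (X ω) * q (X ω))
          + -(p (X ω) * q (X ω) * b (X ω) * (1 - p (X ω)) * (1 - F (X ω)))) ∂μ
          + ∫ ω, -(p (X ω) * q (X ω) * b (X ω) * (1 - p (X ω)) * F (X ω)) ∂μ :=
      integral_add (if2.add if4) if5
    have e0 : ∫ ω, ((((1 - p (X ω)) * b (X ω)) * (p (X ω) * q (X ω))
          + -(p (X ω) * q (X ω) * b (X ω) * (1 - p (X ω)) * (1 - F (X ω))))
          + -(p (X ω) * q (X ω) * b (X ω) * (1 - p (X ω)) * F (X ω))) ∂μ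
        = ∫ _, (0:ℝ) ∂μ := integral_congr_ae (Eventually.of_forall fun ω => by ring)
    rw [integral_zero] at e0
    linarith [e0, e1, e2]
  -- put everything together
  calc ∫ ω, (R ω * ε ω * c (X ω) + (R ω - p (X ω)) * (Z ω - F (X ω)) * b (X ω))
          * (R ω * A ω
             + (1 - R ω) * (q (X ω) / F (X ω)) * ((Z ω - F (X ω)) / (1 - F (X ω)))) ∂μ
      = ∫ ω, (c (X ω) * (R ω * ε ω * A ω)
        + ((1 - p (X ω)) * b (X ω)) * (R ω * Z ω * A ω)
        + (-(F (X ω) * (1 - p (X ω)) * b (X ω))) * (R ω * A ω)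
        + (-(p (X ω) * q (X ω) * b (X ω) * (1 - F (X ω)) / F (X ω))) * ((1 - R ω) * Z ω)
        + (-(p (X ω) * q (X ω) * b (X ω) * F (X ω) / (1 - F (X ω))))
            * ((1 - R ω) * (1 - Z ω))) ∂μ := integral_congr_ae (Eventually.of_forall hpoint)
    _ = 0 := by
      have s1 : ∫ ω, (c (X ω) * (R ω * ε ω * A ω)
            + ((1 - p (X ω)) * b (X ω)) * (R ω * Z ω * A ω)) ∂μ
          = ∫ ω, c (X ω) * (R ω * ε ω * A ω) ∂μ
            + ∫ ω, ((1 - p (X ω)) * b (X ω)) * (R ω * Z ω * A ω) ∂μ :=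
        integral_add igU1 igU2
      have s2 : ∫ ω, ((c (X ω) * (R ω * ε ω * A ω)
            + ((1 - p (X ω)) * b (X ω)) * (R ω * Z ω * A ω))
            + (-(F (X ω) * (1 - p (X ω)) * b (X ω))) * (R ω * A ω)) ∂μ
          = ∫ ω, (c (X ω) * (R ω * ε ω * A ω)
            + ((1 - p (X ω)) * b (X ω)) * (R ω * Z ω * A ω)) ∂μ
            + ∫ ω, (-(F (X ω) * (1 - p (X ω)) * b (X ω))) * (R ω * A ω) ∂μ :=
        integral_add (igU1.add igU2) igU3
      have s3 : ∫ ω, (((c (X ω) * (R ω * ε ω * A ω)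
            + ((1 - p (X ω)) * b (X ω)) * (R ω * Z ω * A ω))
            + (-(F (X ω) * (1 - p (X ω)) * b (X ω))) * (R ω * A ω))
            + (-(p (X ω) * q (X ω) * b (X ω) * (1 - F (X ω)) / F (X ω)))
              * ((1 - R ω) * Z ω)) ∂μ
          = ∫ ω, ((c (X ω) * (R ω * ε ω * A ω)
            + ((1 - p (X ω)) * b (X ω)) * (R ω * Z ω * A ω))
            + (-(F (X ω) * (1 - p (X ω)) * b (X ω))) * (R ω * A ω)) ∂μ
            + ∫ ω, (-(p (X ω) * q (X ω) * b (X ω) * (1 - F (X ω)) / F (X ω)))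
              * ((1 - R ω) * Z ω) ∂μ :=
        integral_add ((igU1.add igU2).add igU3) igU4
      have s4 : ∫ ω, ((((c (X ω) * (R ω * ε ω * A ω)
            + ((1 - p (X ω)) * b (X ω)) * (R ω * Z ω * A ω))
            + (-(F (X ω) * (1 - p (X ω)) * b (X ω))) * (R ω * A ω))
            + (-(p (X ω) * q (X ω) * b (X ω) * (1 - F (X ω)) / F (X ω)))
              * ((1 - R ω) * Z ω))
            + (-(p (X ω) * q (X ω) * b (X ω) * F (X ω) / (1 - F (X ω))))
              * ((1 - R ω) * (1 - Z ω))) ∂μ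
          = ∫ ω, (((c (X ω) * (R ω * ε ω * A ω)
            + ((1 - p (X ω)) * b (X ω)) * (R ω * Z ω * A ω))
            + (-(F (X ω) * (1 - p (X ω)) * b (X ω))) * (R ω * A ω))
            + (-(p (X ω) * q (X ω) * b (X ω) * (1 - F (X ω)) / F (X ω)))
              * ((1 - R ω) * Z ω)) ∂μ
            + ∫ ω, (-(p (X ω) * q (X ω) * b (X ω) * F (X ω) / (1 - F (X ω))))
              * ((1 - R ω) * (1 - Z ω)) ∂μ :=
        integral_add (((igU1.add igU2).add igU3).add igU4) igU5
      linarith [s1, s2, s3, s4, E1, E2, E3, E4, E5, final]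
end

section
/- In the combined-data model, assume (i) μ[R | 𝔪] = p(X) a.s.; (ii) μ[R·ε | 𝔪] = 0 a.s.; (iii) μ[Z | 𝔪] = F(X) a.s.; (iv) μ[R·Z | 𝔪] = p(X)·F(X) a.s., where p, F : ℝᵖ → ℝ are measurable, R·ε is integrable, and let F*, m, K : ℝᵖ → ℝ be bounded measurable functions with D(x) := m(x)²·(1 − p(x)) + K(x). Then almost surely, μ[ (F*(X) − Z)·m(X)·D(X) + m(X)²·( R·ε·(F*(X) − 1)·F*(X) + (p(X) − R)·(F*(X) − Z)·m(X) ) | 𝔪 ] = (F*(X) − F(X))·m(X)·D(X). -/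
open MeasureTheory ProbabilityTheory

private lemma abs_mul_le_of_le {x y a b : ℝ} (hx : |x| ≤ a) (hy : |y| ≤ b) :
    |x * y| ≤ a * b := by
  rw [abs_mul]
  exact mul_le_mul hx hy (abs_nonneg _) ((abs_nonneg x).trans hx)

/-- Conditional-expectation identity quantifying the effect of estimating the
sampling-propensity function `p` on the locally efficient score: with
`D(x) = m(x)²(1 − p(x)) + K(x)`,
`E[(F* − Z)mD + m²(Rε(F* − 1)F* + (p − R)(F* − Z)m) | X] = (F* − F)mD` a.s. -/
theorem condexp_derivative_in_p_identity
    {Ω : Type*} [MeasurableSpace Ω] (μ : Measure Ω) [IsProbabilityMeasure μ]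
    {d : ℕ} (X : Ω → (Fin d → ℝ)) (ε : Ω → ℝ) (R Z : Ω → ℝ)
    (hX : Measurable X) (hε : Measurable ε) (hR : Measurable R) (hZ : Measurable Z)
    (hR01 : ∀ ω, R ω = 0 ∨ R ω = 1) (hZ01 : ∀ ω, Z ω = 0 ∨ Z ω = 1)
    (p F : (Fin d → ℝ) → ℝ) (hp : Measurable p) (hF : Measurable F)
    (h1 : μ[R | MeasurableSpace.comap X inferInstance] =ᵐ[μ] fun ω => p (X ω))
    (h2 : μ[fun ω => R ω * ε ω | MeasurableSpace.comap X inferInstance] =ᵐ[μ] 0)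
    (h3 : μ[Z | MeasurableSpace.comap X inferInstance] =ᵐ[μ] fun ω => F (X ω))
    (h4 : μ[fun ω => R ω * Z ω | MeasurableSpace.comap X inferInstance]
        =ᵐ[μ] fun ω => p (X ω) * F (X ω))
    (hint : Integrable (fun ω => R ω * ε ω) μ)
    (Fstar m K : (Fin d → ℝ) → ℝ)
    (hFstar : Measurable Fstar) (hm : Measurable m) (hK : Measurable K)
    (hFstarbd : ∃ C : ℝ, ∀ x, |Fstar x| ≤ C) (hmbd : ∃ C : ℝ, ∀ x, |m x| ≤ C)
    (hKbd : ∃ C : ℝ, ∀ x, |K x| ≤ C)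
    (D : (Fin d → ℝ) → ℝ) (hD : ∀ x, D x = m x ^ 2 * (1 - p x) + K x) :
    μ[fun ω => (Fstar (X ω) - Z ω) * m (X ω) * D (X ω)
          + m (X ω) ^ 2 * (R ω * ε ω * (Fstar (X ω) - 1) * Fstar (X ω)
              + (p (X ω) - R ω) * (Fstar (X ω) - Z ω) * m (X ω)) |
        MeasurableSpace.comap X inferInstance]
      =ᵐ[μ] fun ω => (Fstar (X ω) - F (X ω)) * m (X ω) * D (X ω) := by
  obtain ⟨Ca, hCa⟩ := hFstarbd
  obtain ⟨Cm, hCm⟩ := hmbd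
  obtain ⟨CK, hCK⟩ := hKbd
  have hCa0 : 0 ≤ Ca := (abs_nonneg _).trans (hCa 0)
  have hCm0 : 0 ≤ Cm := (abs_nonneg _).trans (hCm 0)
  have hCK0 : 0 ≤ CK := (abs_nonneg _).trans (hCK 0)
  have h𝔪 : MeasurableSpace.comap X inferInstance ≤ ‹MeasurableSpace Ω› := hX.comap_le
  set 𝔪 := MeasurableSpace.comap X inferInstance with h𝔪def
  have hXm : Measurable[𝔪] X := Measurable.of_comap_le le_rfl
  -- bounds on R, Z
  have hRb : ∀ ω, |R ω| ≤ 1 := by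
    intro ω; rcases hR01 ω with h | h <;> simp [h]
  have hZb : ∀ ω, |Z ω| ≤ 1 := by
    intro ω; rcases hZ01 ω with h | h <;> simp [h]
  have hRint : Integrable R μ :=
    Integrable.mono' (integrable_const 1) hR.aestronglyMeasurable
      (Filter.Eventually.of_forall fun ω => by rw [Real.norm_eq_abs]; exact hRb ω)
  have hZint : Integrable Z μ :=
    Integrable.mono' (integrable_const 1) hZ.aestronglyMeasurable
      (Filter.Eventually.of_forall fun ω => by rw [Real.norm_eq_abs]; exact hZb ω)
  have hRZint : Integrable (fun ω => R ω * Z ω) μ :=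
    Integrable.mono' (integrable_const 1) (hR.mul hZ).aestronglyMeasurable
      (Filter.Eventually.of_forall fun ω => by
        rw [Real.norm_eq_abs]
        exact (abs_mul_le_of_le (hRb ω) (hZb ω)).trans (by norm_num))
  -- a.e. bounds on p ∘ X
  have hp0 : 0 ≤ᵐ[μ] μ[R | 𝔪] :=
    condExp_nonneg (Filter.Eventually.of_forall fun ω => by
      rcases hR01 ω with h | h <;> simp [h])
  have hp1 : μ[R | 𝔪] ≤ᵐ[μ] fun _ => (1 : ℝ) := by
    have := condExp_mono (m := 𝔪) (μ := μ) hRint (integrable_const (1 : ℝ))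
      (Filter.Eventually.of_forall fun ω => by
        rcases hR01 ω with h | h <;> simp [h])
    rw [condExp_const h𝔪] at this
    exact this
  have hp01 : ∀ᵐ ω ∂μ, 0 ≤ p (X ω) ∧ p (X ω) ≤ 1 := by
    filter_upwards [hp0, hp1, h1] with ω h0 hle heq
    rw [heq] at h0 hle
    exact ⟨h0, hle⟩
  -- a.e. bound on D ∘ X
  have hDb : ∀ᵐ ω ∂μ, |D (X ω)| ≤ Cm ^ 2 + CK := by
    filter_upwards [hp01] with ω hpω
    rw [hD]
    have hm2 : m (X ω) ^ 2 ≤ Cm ^ 2 := by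
      have := hCm (X ω)
      nlinarith [abs_nonneg (m (X ω)), neg_abs_le (m (X ω)), le_abs_self (m (X ω))]
    have hm2' : 0 ≤ m (X ω) ^ 2 := sq_nonneg _
    have hKω := hCK (X ω)
    rw [abs_le] at hKω ⊢
    constructor <;> nlinarith [hpω.1, hpω.2]
  -- the five pieces
  set t1 : Ω → ℝ := fun ω => Fstar (X ω) * m (X ω) * D (X ω)
      + m (X ω) ^ 3 * p (X ω) * Fstar (X ω) with ht1def
  set c2 : (Fin d → ℝ) → ℝ := fun x => -(m x * D x) - m x ^ 3 * p x with hc2def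
  set c3 : (Fin d → ℝ) → ℝ := fun x => m x ^ 2 * (Fstar x - 1) * Fstar x with hc3def
  set c4 : (Fin d → ℝ) → ℝ := fun x => -(m x ^ 3 * Fstar x) with hc4def
  set c5 : (Fin d → ℝ) → ℝ := fun x => m x ^ 3 with hc5def
  have hm3 : ∀ x, |m x ^ 3| ≤ Cm ^ 3 := by
    intro x
    rw [abs_pow]
    exact pow_le_pow_left₀ (abs_nonneg _) (hCm x) 3
  -- measurability facts
  have hmc2 : Measurable c2 := by
    have hDmeas : Measurable D := by
      have : D = fun x => m x ^ 2 * (1 - p x) + K x := funext hD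
      rw [this]; fun_prop
    fun_prop
  have hmc3 : Measurable c3 := by fun_prop
  have hmc4 : Measurable c4 := by fun_prop
  have hmc5 : Measurable c5 := by fun_prop
  have ht1meas : Measurable t1 := by
    have hDmeas : Measurable D := by
      have : D = fun x => m x ^ 2 * (1 - p x) + K x := funext hD
      rw [this]; fun_prop
    fun_prop
  -- strong measurability wrt 𝔪 of c ∘ X
  have hsm : ∀ (c : (Fin d → ℝ) → ℝ), Measurable c →
      StronglyMeasurable[𝔪] (fun ω => c (X ω)) := fun c hc =>
    (hc.comp hXm).stronglyMeasurable
  -- integrability of each piece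
  have ht1int : Integrable t1 μ := by
    refine Integrable.mono' (integrable_const (Ca * Cm * (Cm ^ 2 + CK) + Cm ^ 3 * Ca))
      ((ht1meas.mono h𝔪 le_rfl).aestronglyMeasurable (μ := μ)) ?_
    filter_upwards [hDb, hp01] with ω hDω hpω
    rw [Real.norm_eq_abs, ht1def]
    have hpabs : |p (X ω)| ≤ 1 := abs_le.mpr ⟨by linarith [hpω.1], hpω.2⟩
    have h1' : |Fstar (X ω) * m (X ω) * D (X ω)| ≤ Ca * Cm * (Cm ^ 2 + CK) :=
      abs_mul_le_of_le (abs_mul_le_of_le (hCa _) (hCm _)) hDω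
    have h2' : |m (X ω) ^ 3 * p (X ω) * Fstar (X ω)| ≤ Cm ^ 3 * 1 * Ca :=
      abs_mul_le_of_le (abs_mul_le_of_le (hm3 _) hpabs) (hCa _)
    calc |Fstar (X ω) * m (X ω) * D (X ω) + m (X ω) ^ 3 * p (X ω) * Fstar (X ω)|
        ≤ |Fstar (X ω) * m (X ω) * D (X ω)| + |m (X ω) ^ 3 * p (X ω) * Fstar (X ω)| :=
          abs_add_le _ _
      _ ≤ Ca * Cm * (Cm ^ 2 + CK) + Cm ^ 3 * Ca := by linarith
  have ht2int : Integrable (fun ω => c2 (X ω) * Z ω) μ := by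
    refine Integrable.mono' (integrable_const ((Cm * (Cm ^ 2 + CK) + Cm ^ 3) * 1))
      (((hmc2.comp hX).mul hZ).aestronglyMeasurable) ?_
    filter_upwards [hDb, hp01] with ω hDω hpω
    rw [Real.norm_eq_abs]
    have hpabs : |p (X ω)| ≤ 1 := abs_le.mpr ⟨by linarith [hpω.1], hpω.2⟩
    have hc2b : |c2 (X ω)| ≤ Cm * (Cm ^ 2 + CK) + Cm ^ 3 := by
      rw [hc2def]
      calc |(-(m (X ω) * D (X ω)) - m (X ω) ^ 3 * p (X ω))|
          ≤ |(-(m (X ω) * D (X ω)))| + |m (X ω) ^ 3 * p (X ω)| := abs_sub _ _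
        _ ≤ Cm * (Cm ^ 2 + CK) + Cm ^ 3 := by
            rw [abs_neg]
            have := abs_mul_le_of_le (hCm (X ω)) hDω
            have h2' := abs_mul_le_of_le (hm3 (X ω)) hpabs
            rw [mul_one] at h2'
            linarith
    exact abs_mul_le_of_le hc2b (hZb ω)
  have ht3int : Integrable (fun ω => c3 (X ω) * (R ω * ε ω)) μ := by
    refine hint.bdd_mul (c := Cm ^ 2 * (Ca + 1) * Ca) ((hmc3.comp hX).aestronglyMeasurable)
      (Filter.Eventually.of_forall fun ω => ?_)
    rw [Real.norm_eq_abs, hc3def]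
    have hsq : |m (X ω) ^ 2| ≤ Cm ^ 2 := by
      rw [abs_pow]; exact pow_le_pow_left₀ (abs_nonneg _) (hCm _) 2
    have hsub : |Fstar (X ω) - 1| ≤ Ca + 1 := by
      calc |Fstar (X ω) - 1| ≤ |Fstar (X ω)| + |(1 : ℝ)| := abs_sub _ _
        _ ≤ Ca + 1 := by simpa using add_le_add_right (hCa _) 1
    exact abs_mul_le_of_le (abs_mul_le_of_le hsq hsub) (hCa _)
  have ht4int : Integrable (fun ω => c4 (X ω) * R ω) μ := by
    refine Integrable.mono' (integrable_const (Cm ^ 3 * Ca * 1))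
      (((hmc4.comp hX).mul hR).aestronglyMeasurable)
      (Filter.Eventually.of_forall fun ω => ?_)
    rw [Real.norm_eq_abs]
    have hc4b : |c4 (X ω)| ≤ Cm ^ 3 * Ca := by
      rw [hc4def, abs_neg]
      exact abs_mul_le_of_le (hm3 _) (hCa _)
    exact abs_mul_le_of_le hc4b (hRb ω)
  have ht5int : Integrable (fun ω => c5 (X ω) * (R ω * Z ω)) μ := by
    refine Integrable.mono' (integrable_const (Cm ^ 3 * (1 * 1)))
      (((hmc5.comp hX).mul (hR.mul hZ)).aestronglyMeasurable)
      (Filter.Eventually.of_forall fun ω => ?_)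
    rw [Real.norm_eq_abs]
    exact abs_mul_le_of_le (hm3 _) (abs_mul_le_of_le (hRb ω) (hZb ω))
  -- decomposition of the integrand
  have hdecomp : (fun ω => (Fstar (X ω) - Z ω) * m (X ω) * D (X ω)
          + m (X ω) ^ 2 * (R ω * ε ω * (Fstar (X ω) - 1) * Fstar (X ω)
              + (p (X ω) - R ω) * (Fstar (X ω) - Z ω) * m (X ω)))
      = (t1 + ((fun ω => c2 (X ω) * Z ω) + ((fun ω => c3 (X ω) * (R ω * ε ω))
          + ((fun ω => c4 (X ω) * R ω) + fun ω => c5 (X ω) * (R ω * Z ω))))) := by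
    funext ω
    simp only [Pi.add_apply, ht1def, hc2def, hc3def, hc4def, hc5def]
    ring
  rw [hdecomp]
  -- compute conditional expectations
  haveI : SigmaFinite (μ.trim h𝔪) := by
    infer_instance
  have e1 : μ[t1 | 𝔪] = t1 := by
    have hDmeas : Measurable D := by
      have : D = fun x => m x ^ 2 * (1 - p x) + K x := funext hD
      rw [this]; fun_prop
    have ht1c : Measurable (fun x => Fstar x * m x * D x + m x ^ 3 * p x * Fstar x) := by
      fun_prop
    exact condExp_of_stronglyMeasurable (μ := μ) h𝔪
      ((ht1c.comp hXm).stronglyMeasurable : StronglyMeasurable[𝔪] t1) ht1int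
  have e2 : μ[fun ω => c2 (X ω) * Z ω | 𝔪] =ᵐ[μ] fun ω => c2 (X ω) * F (X ω) := by
    have := condExp_mul_of_stronglyMeasurable_left (m := 𝔪) (μ := μ) (hsm c2 hmc2)
      (g := Z) ht2int hZint
    refine this.trans ?_
    filter_upwards [h3] with ω hω
    simp only [Pi.mul_apply, hω]
  have e3 : μ[fun ω => c3 (X ω) * (R ω * ε ω) | 𝔪] =ᵐ[μ] fun _ => (0 : ℝ) := by
    have := condExp_mul_of_stronglyMeasurable_left (m := 𝔪) (μ := μ) (hsm c3 hmc3)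
      (g := fun ω => R ω * ε ω) ht3int hint
    refine this.trans ?_
    filter_upwards [h2] with ω hω
    simp only [Pi.mul_apply, hω, Pi.zero_apply, mul_zero]
  have e4 : μ[fun ω => c4 (X ω) * R ω | 𝔪] =ᵐ[μ] fun ω => c4 (X ω) * p (X ω) := by
    have := condExp_mul_of_stronglyMeasurable_left (m := 𝔪) (μ := μ) (hsm c4 hmc4)
      (g := R) ht4int hRint
    refine this.trans ?_
    filter_upwards [h1] with ω hω
    simp only [Pi.mul_apply, hω]
  have e5 : μ[fun ω => c5 (X ω) * (R ω * Z ω) | 𝔪]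
      =ᵐ[μ] fun ω => c5 (X ω) * (p (X ω) * F (X ω)) := by
    have := condExp_mul_of_stronglyMeasurable_left (m := 𝔪) (μ := μ) (hsm c5 hmc5)
      (g := fun ω => R ω * Z ω) ht5int hRZint
    refine this.trans ?_
    filter_upwards [h4] with ω hω
    simp only [Pi.mul_apply, hω]
  have hadd : μ[t1 + ((fun ω => c2 (X ω) * Z ω) + ((fun ω => c3 (X ω) * (R ω * ε ω))
          + ((fun ω => c4 (X ω) * R ω) + fun ω => c5 (X ω) * (R ω * Z ω)))) | 𝔪]
      =ᵐ[μ] μ[t1 | 𝔪] + (μ[fun ω => c2 (X ω) * Z ω | 𝔪]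
        + (μ[fun ω => c3 (X ω) * (R ω * ε ω) | 𝔪]
          + (μ[fun ω => c4 (X ω) * R ω | 𝔪] + μ[fun ω => c5 (X ω) * (R ω * Z ω) | 𝔪]))) := by
    refine (condExp_add ht1int (ht2int.add (ht3int.add (ht4int.add ht5int))) 𝔪).trans ?_
    refine Filter.EventuallyEq.add Filter.EventuallyEq.rfl ?_
    refine (condExp_add ht2int (ht3int.add (ht4int.add ht5int)) 𝔪).trans ?_
    refine Filter.EventuallyEq.add Filter.EventuallyEq.rfl ?_
    refine (condExp_add ht3int (ht4int.add ht5int) 𝔪).trans ?_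
    refine Filter.EventuallyEq.add Filter.EventuallyEq.rfl ?_
    exact condExp_add ht4int ht5int 𝔪
  refine hadd.trans ?_
  rw [e1]
  filter_upwards [e2, e3, e4, e5] with ω h2' h3' h4' h5'
  simp only [Pi.add_apply, h2', h3', h4', h5']
  simp only [ht1def, hc2def, hc3def, hc4def, hc5def]
  ring
end
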